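/- arXiv:2401.01457 — 11 statements merged into one kernel-verified Lean document; each statement's English description precedes it below -/
import Mathlib

section
/- Let P be a finite partially ordered set equipped with an involution φ : P → P (so φ∘φ = id) satisfying a ≤ b if and only if φ(b) ≤ φ(a). Then for any two self-complementary ideals I and J of P, the distance from I to J in the flip graph of P equals |I \ J|; in particular, the flip graph of P is connected. -/
open Finset

/-- An ideal (downward-closed subset, possibly empty) of a finite poset. -/
def IsIdeal {P : Type*} [PartialOrder P] (I : Finset P) : Prop :=
  ∀ a ∈ I, ∀ b, b ≤ a → b ∈ I

/-- A self-complementary ideal with respect to an involution `φ`. -/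
def IsSCIdeal {P : Type*} [PartialOrder P] (φ : P → P) (I : Finset P) : Prop :=
  IsIdeal I ∧ ∀ a, a ∈ I ↔ φ a ∉ I

/-- The flip graph on self-complementary ideals: two ideals are adjacent when they
differ in exactly one element each way. -/
def FlipGraph {P : Type*} [PartialOrder P] [DecidableEq P] (φ : P → P) :
    SimpleGraph {I : Finset P // IsSCIdeal φ I} where
  Adj I J := I ≠ J ∧ (I.1 \ J.1).card = 1 ∧ (J.1 \ I.1).card = 1
  symm := ⟨fun _ _ h => ⟨h.1.symm, h.2.2, h.2.1⟩⟩
  loopless := ⟨fun _ h => h.1 rfl⟩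

/-- Eccentricity of a vertex: its maximum distance to any vertex. -/
noncomputable def eccentricity {V : Type*} (G : SimpleGraph V) (v : V) : ℕ :=
  ⨆ u, G.dist v u

/-- Diameter of a graph: the maximum eccentricity. -/
noncomputable def graphDiam {V : Type*} (G : SimpleGraph V) : ℕ :=
  ⨆ v, eccentricity G v

/-- Radius of a graph: the minimum eccentricity. -/
noncomputable def graphRadius {V : Type*} (G : SimpleGraph V) : ℕ :=
  ⨅ v, eccentricity G v

/-- The order-reversing involution `aᵢ ↦ ℓᵢ + 1 - aᵢ` on a product of chains
(0-indexed via `Fin.rev`). -/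
def chainRev {d : ℕ} (ℓ : Fin d → ℕ) (a : ∀ i, Fin (ℓ i)) : ∀ i, Fin (ℓ i) :=
  fun i => (a i).rev

/-!
Along an edge of the flip graph `I \ J` loses at most one element, so every walk from `I` to `J`
has length at least `|I \ J|`. Conversely, let `x` be maximal in `I \ J`. As `J` is an ideal,
`x` is maximal in `I`, `φ x ∈ J` and `x ≰ φ x`; hence exchanging `x` for `φ x` in `I` yields a
self-complementary ideal adjacent to `I` with one element fewer outside `J`.
-/

open SimpleGraph

namespace IsSCIdeal

variable {P : Type*} [PartialOrder P] {φ : P → P} {I J : Finset P} {a : P}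

lemma apply_notMem (hI : IsSCIdeal φ I) (ha : a ∈ I) : φ a ∉ I := (hI.2 a).1 ha

lemma apply_mem_of_notMem (hI : IsSCIdeal φ I) (ha : a ∉ I) : φ a ∈ I :=
  not_not.1 (mt (hI.2 a).2 ha)

lemma eq_of_subset (hI : IsSCIdeal φ I) (hJ : IsSCIdeal φ J) (h : I ⊆ J) : I = J :=
  h.antisymm fun _ ha => by_contra fun haI => hJ.apply_notMem ha (h (hI.apply_mem_of_notMem haI))

end IsSCIdeal

section Flip

variable {P : Type*} [DecidableEq P] {φ : P → P} {I J : Finset P} {x : P}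

def flipAt (φ : P → P) (I : Finset P) (x : P) : Finset P :=
  insert (φ x) (I.erase x)

lemma mem_flipAt {a : P} : a ∈ flipAt φ I x ↔ a = φ x ∨ a ≠ x ∧ a ∈ I := by
  simp only [flipAt, Finset.mem_insert, Finset.mem_erase]

lemma flipAt_mem_iff_apply_notMem (hinv : ∀ a, φ (φ a) = a) (hI : ∀ a, a ∈ I ↔ φ a ∉ I)
    (hx : x ∈ I) (a : P) : a ∈ flipAt φ I x ↔ φ a ∉ flipAt φ I x := by
  have := hI a; have := hI x; have := hinv a; have := hinv x
  simp only [mem_flipAt]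
  grind

lemma sdiff_flipAt (hx : x ∈ I) (hφx : φ x ∉ I) : I \ flipAt φ I x = {x} := by
  ext a; simp only [Finset.mem_sdiff, mem_flipAt, Finset.mem_singleton]; grind

lemma flipAt_sdiff (hφx : φ x ∉ I) : flipAt φ I x \ I = {φ x} := by
  ext a; simp only [Finset.mem_sdiff, mem_flipAt, Finset.mem_singleton]; grind

lemma flipAt_sdiff_of_apply_mem (hφx : φ x ∈ J) : flipAt φ I x \ J = (I \ J).erase x := by
  ext a; simp only [Finset.mem_sdiff, mem_flipAt, Finset.mem_erase]; grind

variable [PartialOrder P]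

lemma isIdeal_flipAt (hinv : ∀ a, φ (φ a) = a) (hord : ∀ a b : P, a ≤ b ↔ φ b ≤ φ a)
    (hI : IsSCIdeal φ I) (hmax : ∀ b ∈ I, ¬ x < b) (hx : ¬ x ≤ φ x) :
    IsIdeal (flipAt φ I x) := by
  intro a ha b hba
  rw [mem_flipAt] at ha ⊢
  rcases ha with rfl | ⟨hax, haI⟩
  · rcases eq_or_ne b (φ x) with rfl | hbx
    · exact .inl rfl
    have hxb : x < φ b := lt_of_le_of_ne (by simpa [hinv] using (hord b (φ x)).1 hba)
      fun h => hbx (by rw [h, hinv])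
    exact .inr ⟨fun h => hx (h ▸ hba),
      by_contra fun hbI => hmax _ (hI.apply_mem_of_notMem hbI) hxb⟩
  · exact .inr ⟨fun h => hmax a haI (lt_of_le_of_ne (h ▸ hba) hax.symm), hI.1 a haI b hba⟩

end Flip

namespace FlipGraph

variable {P : Type*} [PartialOrder P] [DecidableEq P] {φ : P → P}

lemma card_sdiff_le_length {I J : {I : Finset P // IsSCIdeal φ I}} (p : (FlipGraph φ).Walk I J) :
    (I.1 \ J.1).card ≤ p.length := by
  induction p with
  | nil => simp
  | @cons I K J hadj p ih =>
    calc (I.1 \ J.1).card ≤ (I.1 \ K.1 ∪ K.1 \ J.1).card :=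
          Finset.card_le_card (sdiff_triangle _ _ _)
      _ ≤ (I.1 \ K.1).card + (K.1 \ J.1).card := Finset.card_union_le _ _
      _ ≤ (Walk.cons hadj p).length := by rw [hadj.2.1, Walk.length_cons]; omega

lemma exists_adj_card_sdiff_add_one (hinv : ∀ a, φ (φ a) = a)
    (hord : ∀ a b : P, a ≤ b ↔ φ b ≤ φ a) {I J : {I : Finset P // IsSCIdeal φ I}}
    (h : (I.1 \ J.1).Nonempty) :
    ∃ K, (FlipGraph φ).Adj I K ∧ (K.1 \ J.1).card + 1 = (I.1 \ J.1).card := by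
  obtain ⟨x, hxIJ, hxmax⟩ := (I.1 \ J.1).exists_maximal h
  obtain ⟨hxI, hxJ⟩ := Finset.mem_sdiff.1 hxIJ
  have hφxJ : φ x ∈ J.1 := J.2.apply_mem_of_notMem hxJ
  have hφxI : φ x ∉ I.1 := I.2.apply_notMem hxI
  have hmax : ∀ b ∈ I.1, ¬ x < b := fun b hb hxb =>
    hxb.not_ge (hxmax (Finset.mem_sdiff.2 ⟨hb, fun hbJ => hxJ (J.2.1 b hbJ x hxb.le)⟩) hxb.le)
  have hx : ¬ x ≤ φ x := fun h => hxJ (J.2.1 _ hφxJ x h)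
  refine ⟨⟨flipAt φ I.1 x, isIdeal_flipAt hinv hord I.2 hmax hx,
    flipAt_mem_iff_apply_notMem hinv I.2.2 hxI⟩, ⟨?_, ?_, ?_⟩, ?_⟩
  · exact fun h => hφxI (by rw [congrArg Subtype.val h]; exact Finset.mem_insert_self _ _)
  · simp [sdiff_flipAt hxI hφxI]
  · simp [flipAt_sdiff hφxI]
  · rw [flipAt_sdiff_of_apply_mem hφxJ, Finset.card_erase_add_one hxIJ]

lemma exists_walk_length_eq_card_sdiff (hinv : ∀ a, φ (φ a) = a)
    (hord : ∀ a b : P, a ≤ b ↔ φ b ≤ φ a) (I J : {I : Finset P // IsSCIdeal φ I}) :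
    ∃ p : (FlipGraph φ).Walk I J, p.length = (I.1 \ J.1).card := by
  obtain ⟨n, hn⟩ : ∃ n, (I.1 \ J.1).card = n := ⟨_, rfl⟩
  induction n generalizing I with
  | zero =>
    obtain rfl : I = J := Subtype.ext <|
      I.2.eq_of_subset J.2 (Finset.sdiff_eq_empty_iff_subset.1 (Finset.card_eq_zero.1 hn))
    exact ⟨Walk.nil, hn.symm⟩
  | succ n ih =>
    obtain ⟨K, hadj, hK⟩ := exists_adj_card_sdiff_add_one hinv hord
      (Finset.card_pos.1 (by omega : 0 < (I.1 \ J.1).card))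
    obtain ⟨p, hp⟩ := ih K (by omega)
    exact ⟨Walk.cons hadj p, by rw [Walk.length_cons, hp, hK]⟩

end FlipGraph

theorem flipGraph_dist_eq_card_sdiff_general {P : Type*} [PartialOrder P] [DecidableEq P]
    (φ : P → P) (hinv : ∀ a, φ (φ a) = a)
    (hord : ∀ a b : P, a ≤ b ↔ φ b ≤ φ a) :
    (∀ I J : {I : Finset P // IsSCIdeal φ I},
      (FlipGraph φ).dist I J = (I.1 \ J.1).card) ∧
    (FlipGraph φ).Preconnected := by
  have hconn : (FlipGraph φ).Preconnected := fun I J =>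
    (FlipGraph.exists_walk_length_eq_card_sdiff hinv hord I J).elim fun p _ => ⟨p⟩
  refine ⟨fun I J => le_antisymm ?_ ?_, hconn⟩
  · obtain ⟨p, hp⟩ := FlipGraph.exists_walk_length_eq_card_sdiff hinv hord I J
    exact hp ▸ dist_le p
  · obtain ⟨q, hq⟩ := (hconn I J).exists_walk_length_eq_dist
    exact hq ▸ FlipGraph.card_sdiff_le_length q

/-- For any two self-complementary ideals `I`, `J` of a finite self-dual poset,
the distance from `I` to `J` in the flip graph is `|I \ J|`; in particular,
the flip graph is connected (preconnected). -/
theorem flipGraph_dist_eq_card_sdiff {P : Type*} [Fintype P] [PartialOrder P] [DecidableEq P]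
    (φ : P → P) (hinv : ∀ a, φ (φ a) = a)
    (hord : ∀ a b : P, a ≤ b ↔ φ b ≤ φ a) :
    (∀ I J : {I : Finset P // IsSCIdeal φ I},
      (FlipGraph φ).dist I J = (I.1 \ J.1).card) ∧
    (FlipGraph φ).Preconnected :=
  flipGraph_dist_eq_card_sdiff_general φ hinv hord
end

section
/- Let ℓ₁, ℓ₂ be positive integers with ℓ₁ℓ₂ even. Then the number of self-complementary ideals of [ℓ₁]×[ℓ₂] equals the binomial coefficient C(⌊ℓ₁/2⌋ + ⌊ℓ₂/2⌋, ⌊ℓ₁/2⌋). -/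
open Finset

/-- The order-reversing involution on `[ℓ₁] × [ℓ₂]`. -/
def prodRev2 (ℓ₁ ℓ₂ : ℕ) (p : Fin ℓ₁ × Fin ℓ₂) : Fin ℓ₁ × Fin ℓ₂ :=
  (p.1.rev, p.2.rev)

/-!
An ideal `I` of `α × [n]` is determined by its row lengths `r a = #{j | (a, j) ∈ I}`, an
antitone function with values in `[0, n]`, and `I` is self-complementary for `(a, j) ↦ (ψ a, n-1-j)`
exactly when `r a + r (ψ a) = n`. For `ℓ₁ = 2h` such a symmetric profile on `[2h]` is determined by
its first `h` values, which are at least `⌈ℓ₂/2⌉`; so the co-lengths `ℓ₂ - r` on the first half are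
exactly the monotone sequences of length `h` with values in `[0, ⌊ℓ₂/2⌋]`, and `u ↦ (i ↦ u i + i)`
identifies those with the `h`-subsets of `[h + ⌊ℓ₂/2⌋]`. If `ℓ₁` is odd then `ℓ₂` is even, and we
swap the two factors.
-/

lemma Fin.orderEmbedding_add_sub_le {m n : ℕ} (e : Fin m ↪o Fin n) {i j : Fin m} (hij : i ≤ j) :
    (e i : ℕ) + (j - i) ≤ e j := by
  have hcard := card_le_card_of_injOn e
    (fun y hy => mem_Icc.2 ⟨e.monotone (mem_Icc.1 hy).1, e.monotone (mem_Icc.1 hy).2⟩)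
    e.injective.injOn (s := Icc i j) (t := Icc (e i) (e j))
  rw [Fin.card_Icc, Fin.card_Icc] at hcard
  have : (e i : ℕ) ≤ e j := e.monotone hij
  omega

lemma Fin.le_orderEmbedding_apply {m n : ℕ} (e : Fin m ↪o Fin n) (i : Fin m) :
    (i : ℕ) ≤ e i := by
  have := Fin.orderEmbedding_add_sub_le e (show ⟨0, i.pos⟩ ≤ i from Nat.zero_le _)
  simp only at this
  omega

lemma Fin.orderEmbedding_apply_add_le {m n : ℕ} (e : Fin m ↪o Fin n) (i : Fin m) :
    (e i : ℕ) + (m - i) ≤ n := by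
  have hm := i.pos
  have hlast : i ≤ ⟨m - 1, by omega⟩ := Nat.le_sub_one_of_lt i.2
  have := Fin.orderEmbedding_add_sub_le e hlast
  have := (e ⟨m - 1, by omega⟩).2
  simp only at *
  omega

def monotoneBoundedEquiv (m k : ℕ) :
    {u : Fin m → ℕ // Monotone u ∧ ∀ i, u i ≤ k} ≃ (Fin m ↪o Fin (m + k)) where
  toFun u := .ofStrictMono (fun i => ⟨u.1 i + i, by have := u.2.2 i; omega⟩) fun i j hij => by
    have := u.2.1 hij.le
    simp only [Fin.mk_lt_mk]
    omega
  invFun e := ⟨fun i => e i - i,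
    fun i j hij => by
      have := Fin.orderEmbedding_add_sub_le e hij
      dsimp only
      omega,
    fun i => by
      have := Fin.orderEmbedding_apply_add_le e i
      dsimp only
      omega⟩
  left_inv u := by ext i; simp [OrderEmbedding.ofStrictMono]
  right_inv e := by
    ext i
    have := Fin.le_orderEmbedding_apply e i
    simp only [OrderEmbedding.ofStrictMono, OrderEmbedding.coe_ofMapLEIff]
    omega

lemma card_monotone_bounded (m k : ℕ) :
    Nat.card {u : Fin m → ℕ // Monotone u ∧ ∀ i, u i ≤ k} = (m + k).choose m := by
  rw [Nat.card_congr ((monotoneBoundedEquiv m k).trans Set.powersetCard.ofFinEmbEquiv),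
    Set.powersetCard.card, Nat.card_fin]

lemma forall_fin_lt_iff_lt_iff_eq {n x y : ℕ} (hx : x ≤ n) (hy : y ≤ n) :
    (∀ j : Fin n, (j : ℕ) < x ↔ (j : ℕ) < y) ↔ x = y := by
  refine ⟨fun h => ?_, fun h _ => h ▸ Iff.rfl⟩
  by_contra hne
  have := h ⟨min x y, by omega⟩
  simp only at this
  omega

section RowLength

variable {α : Type*} {n : ℕ}

def rowLength [DecidableEq α] (I : Finset (α × Fin n)) (a : α) : ℕ := #{j | (a, j) ∈ I}

def ofRowLengths [Fintype α] (f : α → ℕ) : Finset (α × Fin n) := {p | (p.2 : ℕ) < f p.1}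

@[simp]
lemma mem_ofRowLengths [Fintype α] {f : α → ℕ} {p : α × Fin n} :
    p ∈ ofRowLengths f ↔ (p.2 : ℕ) < f p.1 := by
  simp [ofRowLengths]

lemma rowLength_le [DecidableEq α] (I : Finset (α × Fin n)) (a : α) : rowLength I a ≤ n :=
  (card_filter_le _ _).trans_eq (card_fin n)

lemma rowLength_ofRowLengths [DecidableEq α] [Fintype α] {f : α → ℕ} (hf : ∀ a, f a ≤ n) :
    rowLength (ofRowLengths (n := n) f) = f := by
  ext a
  simp [rowLength, Fin.card_filter_val_lt, hf a]

variable [PartialOrder α]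

lemma lt_rowLength_iff [DecidableEq α] {I : Finset (α × Fin n)} (hI : IsIdeal I) (a : α)
    (j : Fin n) : (j : ℕ) < rowLength I a ↔ (a, j) ∈ I :=
  Fin.lt_card_filter_univ_iff_apply_of_imp _ fun _ _ hji hi => hI _ hi _ ⟨le_rfl, hji⟩

lemma antitone_rowLength [DecidableEq α] {I : Finset (α × Fin n)} (hI : IsIdeal I) :
    Antitone (rowLength I) :=
  fun _ _ hab => card_le_card <| monotone_filter_right _ fun _ _ hj => hI _ hj _ ⟨hab, le_rfl⟩

lemma isIdeal_ofRowLengths [Fintype α] {f : α → ℕ} (hf : Antitone f) :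
    IsIdeal (ofRowLengths (n := n) f) := by
  intro p hp q hqp
  rw [mem_ofRowLengths] at *
  exact lt_of_le_of_lt hqp.2 (hp.trans_le (hf hqp.1))

lemma ofRowLengths_rowLength [DecidableEq α] [Fintype α] {I : Finset (α × Fin n)}
    (hI : IsIdeal I) : ofRowLengths (rowLength I) = I := by
  ext ⟨a, j⟩
  rw [mem_ofRowLengths, lt_rowLength_iff hI]

lemma isSCIdeal_prodMap_rev_iff [DecidableEq α] (ψ : α → α) {I : Finset (α × Fin n)}
    (hI : IsIdeal I) :
    IsSCIdeal (Prod.map ψ Fin.rev) I ↔ ∀ a, rowLength I a + rowLength I (ψ a) = n := by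
  have hrow (a : α) (j : Fin n) :
      ((a, j) ∈ I ↔ Prod.map ψ Fin.rev (a, j) ∉ I) ↔ ((j : ℕ) < rowLength I a ↔
        (j : ℕ) < n - rowLength I (ψ a)) := by
    rw [Prod.map_apply, ← lt_rowLength_iff hI, ← lt_rowLength_iff hI, Fin.val_rev, not_lt]
    exact iff_congr Iff.rfl (by omega)
  simp only [IsSCIdeal, hI, true_and, Prod.forall, hrow,
    forall_fin_lt_iff_lt_iff_eq (rowLength_le I _) (Nat.sub_le _ _)]
  exact forall_congr' fun a => by have := rowLength_le I (ψ a); omega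

end RowLength

def scIdealEquivRowLengths {α : Type*} [PartialOrder α] [Fintype α] [DecidableEq α] (n : ℕ)
    (ψ : α → α) :
    {I : Finset (α × Fin n) // IsSCIdeal (Prod.map ψ Fin.rev) I} ≃
      {f : α → ℕ // Antitone f ∧ ∀ a, f a + f (ψ a) = n} where
  toFun I := ⟨rowLength I.1, antitone_rowLength I.2.1, (isSCIdeal_prodMap_rev_iff ψ I.2.1).1 I.2⟩
  invFun f := ⟨ofRowLengths f.1, (isSCIdeal_prodMap_rev_iff ψ (isIdeal_ofRowLengths f.2.1)).2 <| by
    simpa only [rowLength_ofRowLengths fun a => Nat.le.intro (f.2.2 a)] using f.2.2⟩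
  left_inv I := Subtype.ext (ofRowLengths_rowLength I.2.1)
  right_inv f := Subtype.ext (rowLength_ofRowLengths fun a => Nat.le.intro (f.2.2 a))

lemma Fin.antitone_append {m n : ℕ} {α : Type*} [Preorder α] {u : Fin m → α} {v : Fin n → α}
    (hu : Antitone u) (hv : Antitone v) (huv : ∀ i j, v j ≤ u i) : Antitone (Fin.append u v) := by
  intro i j hij
  induction i using Fin.addCases with
  | left i =>
    induction j using Fin.addCases with
    | left j => simpa using hu ((Fin.strictMono_castAdd n).le_iff_le.1 hij)
    | right j => simpa using huv i j
  | right i =>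
    induction j using Fin.addCases with
    | left j => simp only [Fin.le_def, Fin.val_natAdd, Fin.val_castAdd] at hij; omega
    | right j => simpa using hv ((Fin.natAdd_le_natAdd_iff m).1 hij)

@[simp]
lemma Fin.append_addNat_self {h : ℕ} {α : Type*} (u v : Fin h → α) (i : Fin h) :
    Fin.append u v (i.addNat h) = v i := by
  rw [← Fin.natAdd_eq_addNat, Fin.append_right]

def symmRowLengthsEquiv (h n : ℕ) :
    {f : Fin (h + h) → ℕ // Antitone f ∧ ∀ i, f i + f i.rev = n} ≃
      {u : Fin h → ℕ // Monotone u ∧ ∀ i, u i ≤ n / 2} where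
  toFun f := ⟨fun i => n - f.1 (Fin.castAdd h i), fun i j hij => by
      have := f.2.1 ((Fin.strictMono_castAdd h).monotone hij)
      dsimp only
      omega, fun i => by
      have hsum := f.2.2 (Fin.castAdd h i)
      have := f.2.1 (show Fin.castAdd h i ≤ (Fin.castAdd h i).rev by
        simp only [Fin.le_def, Fin.val_castAdd, Fin.val_rev]; omega)
      dsimp only
      omega⟩
  invFun u := ⟨Fin.append (fun i => n - u.1 i) (fun i => u.1 i.rev),
    Fin.antitone_append (fun i j hij => Nat.sub_le_sub_left (u.2.1 hij) n)
      (fun i j hij => u.2.1 (Fin.rev_le_rev.2 hij))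
      fun i j => by have := u.2.2 i; have := u.2.2 j.rev; omega,
    fun i => by
      induction i using Fin.addCases with
      | left i =>
        have := u.2.2 i
        simp only [Fin.append_left, Fin.rev_castAdd, Fin.append_addNat_self, Fin.rev_rev]
        omega
      | right i =>
        have := u.2.2 i.rev
        simp only [Fin.natAdd_eq_addNat, Fin.append_addNat_self, Fin.rev_addNat, Fin.append_left]
        omega⟩
  left_inv f := by
    ext i
    induction i using Fin.addCases with
    | left i => have := f.2.2 (Fin.castAdd h i); simp only [Fin.append_left]; omega
    | right i =>
      have := f.2.2 (Fin.natAdd h i)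
      simp only [Fin.natAdd_eq_addNat, Fin.rev_addNat, Fin.append_addNat_self] at this ⊢
      omega
  right_inv u := by ext i; have := u.2.2 i; simp only [Fin.append_left]; omega

lemma isSCIdeal_map_orderIso {P Q : Type*} [PartialOrder P] [PartialOrder Q] (e : P ≃o Q)
    {φ : P → P} {φ' : Q → Q} (he : ∀ p, φ' (e p) = e (φ p)) (I : Finset P) :
    IsSCIdeal φ' (I.map e.toEquiv.toEmbedding) ↔ IsSCIdeal φ I := by
  simp [IsSCIdeal, IsIdeal, mem_map_equiv, e.surjective.forall, he]

lemma card_scIdeals_prodRev2_comm (ℓ₁ ℓ₂ : ℕ) :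
    Nat.card {I // IsSCIdeal (prodRev2 ℓ₁ ℓ₂) I} = Nat.card {I // IsSCIdeal (prodRev2 ℓ₂ ℓ₁) I} :=
  Nat.card_congr <| (OrderIso.prodComm.toEquiv.finsetCongr).subtypeEquiv fun I =>
    (isSCIdeal_map_orderIso (φ := prodRev2 ℓ₁ ℓ₂) OrderIso.prodComm (fun _ => rfl) I).symm

lemma card_scIdeals_prodRev2_add_self (h n : ℕ) :
    Nat.card {I // IsSCIdeal (prodRev2 (h + h) n) I} = (h + n / 2).choose h := by
  rw [← card_monotone_bounded]
  exact Nat.card_congr ((scIdealEquivRowLengths n Fin.rev).trans (symmRowLengthsEquiv h n))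

theorem card_scIdeals_two_chains_general (ℓ₁ ℓ₂ : ℕ)
    (heven : Even (ℓ₁ * ℓ₂)) :
    Nat.card {I : Finset (Fin ℓ₁ × Fin ℓ₂) // IsSCIdeal (prodRev2 ℓ₁ ℓ₂) I} =
      Nat.choose (ℓ₁ / 2 + ℓ₂ / 2) (ℓ₁ / 2) := by
  rcases Nat.even_mul.1 heven with ⟨h, rfl⟩ | ⟨h, rfl⟩
  · rw [card_scIdeals_prodRev2_add_self, show (h + h) / 2 = h by omega]
  · rw [card_scIdeals_prodRev2_comm, card_scIdeals_prodRev2_add_self,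
      show (h + h) / 2 = h by omega, Nat.add_comm, Nat.choose_symm_add]

/-- The number of self-complementary ideals of `[ℓ₁] × [ℓ₂]` (with `ℓ₁ℓ₂` even) is
`C(⌊ℓ₁/2⌋ + ⌊ℓ₂/2⌋, ⌊ℓ₁/2⌋)`. -/
theorem card_scIdeals_two_chains (ℓ₁ ℓ₂ : ℕ) (h₁ : 0 < ℓ₁) (h₂ : 0 < ℓ₂)
    (heven : Even (ℓ₁ * ℓ₂)) :
    Nat.card {I : Finset (Fin ℓ₁ × Fin ℓ₂) // IsSCIdeal (prodRev2 ℓ₁ ℓ₂) I} =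
      Nat.choose (ℓ₁ / 2 + ℓ₂ / 2) (ℓ₁ / 2) :=
  card_scIdeals_two_chains_general ℓ₁ ℓ₂ heven
end

section
/- Let d be a positive integer and let ℓ₁,…,ℓ_{d−1} be a fixed sequence of positive integers, and set k = ⌊ℓ₁⋯ℓ_{d−1}/2⌋. Let N(n) denote the number of self-complementary ideals of [ℓ₁]×⋯×[ℓ_{d−1}]×[n]. Then there exists a real constant C > 0 such that N(n)/n^k tends to C as n tends to infinity, where if ℓ₁⋯ℓ_{d−1} is even then n ranges over all positive integers, and if ℓ₁⋯ℓ_{d−1} is odd then n ranges over all even positive integers. -/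
open Finset

/-- The order-reversing involution on `[ℓ₁] × ⋯ × [ℓ_{d-1}] × [n]`. -/
def prodRevMix {m : ℕ} (ℓ : Fin m → ℕ) (n : ℕ) (p : (∀ i, Fin (ℓ i)) × Fin n) :
    (∀ i, Fin (ℓ i)) × Fin n :=
  (fun i => (p.1 i).rev, p.2.rev)

/-!
A self-complementary ideal of `P × [n]` is determined by its height function
`h : P → {0, …, n}`, which is antitone with `h ∘ φ = n - h`. Such an `h` is determined by its
values at one point of each two-element orbit of `φ`, and equals `n / 2` at the fixed points of
`φ`, which is where the parity of `n` enters. Hence self-complementary ideals are the lattice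
points of `n • Q`, where `Q ⊆ ℝ^k` (`k` the number of two-element orbits) is the polytope of
antitone `f : P → [0, 1]` with `f ∘ φ = 1 - f`. This polytope is convex, bounded and has
nonempty interior, so the count is `vol Q · n^k + o(n^k)`. For a product of chains the
involution has at most one fixed point, so `k = ⌊ℓ₁⋯ℓ_{d-1} / 2⌋`.
-/

open Finset Function MeasureTheory Filter Topology Pointwise

section OrbitRep

variable {P : Type*} [Fintype P] (φ : P → P)

/-- `p` represents its two-element orbit `{p, φ p}` when it comes first in a fixed enumeration
of `P`. -/
def IsOrbitRep (p : P) : Prop :=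
  Fintype.equivFin P p < Fintype.equivFin P (φ p)

noncomputable instance : DecidablePred (IsOrbitRep φ) :=
  fun _ => inferInstanceAs (Decidable (_ < _))

abbrev OrbitRep : Type _ := {p : P // IsOrbitRep φ p}

variable {φ}

lemma not_isOrbitRep_of_isOrbitRep_apply (hφ : Involutive φ) {p : P}
    (h : IsOrbitRep φ (φ p)) : ¬ IsOrbitRep φ p := by
  unfold IsOrbitRep at *
  rw [hφ p] at h
  exact h.not_gt

lemma apply_eq_self_of_not_isOrbitRep (hφ : Involutive φ) {p : P} (h : ¬ IsOrbitRep φ p)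
    (h' : ¬ IsOrbitRep φ (φ p)) : φ p = p := by
  unfold IsOrbitRep at *
  rw [hφ p] at h'
  exact (Fintype.equivFin P).injective (le_antisymm (not_lt.1 h) (not_lt.1 h'))

lemma not_isOrbitRep_of_apply_eq_self {p : P} (h : φ p = p) : ¬ IsOrbitRep φ p := by
  unfold IsOrbitRep
  rw [h]
  exact lt_irrefl _

theorem two_mul_card_orbitRep_add_card_fixedPoints (hφ : Involutive φ) :
    2 * Fintype.card (OrbitRep φ) + Nat.card (fixedPoints φ) = Fintype.card P := by
  classical
  have hsplit (p : P) : (if IsOrbitRep φ p then 1 else 0) + (if IsOrbitRep φ (φ p) then 1 else 0)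
      + (if φ p = p then 1 else 0) = 1 := by
    by_cases h : IsOrbitRep φ p
    · have h' := not_isOrbitRep_of_isOrbitRep_apply hφ (p := φ p) (by rwa [hφ p])
      have hne : φ p ≠ p := fun hp => not_isOrbitRep_of_apply_eq_self hp h
      simp [h, h', hne]
    by_cases h' : IsOrbitRep φ (φ p)
    · have hne : φ p ≠ p := fun hp => not_isOrbitRep_of_apply_eq_self (by rw [hp, hp]) h'
      simp [h, h', hne]
    · simp [h, apply_eq_self_of_not_isOrbitRep hφ h h']
  have hswap :
      ∑ p, (if IsOrbitRep φ (φ p) then 1 else 0) = ∑ p, if IsOrbitRep φ p then 1 else 0 :=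
    Equiv.sum_comp (hφ.toPerm φ) fun p => if IsOrbitRep φ p then 1 else 0
  calc 2 * Fintype.card (OrbitRep φ) + Nat.card (fixedPoints φ)
      = 2 * ∑ p, (if IsOrbitRep φ p then 1 else 0) + ∑ p, (if φ p = p then 1 else 0) := by
        simp [sum_boole, Fintype.card_subtype, Nat.card_eq_fintype_card, IsFixedPt]
    _ = ∑ p : P, 1 := by
        rw [← Finset.sum_congr rfl fun p _ => hsplit p, sum_add_distrib, sum_add_distrib, hswap,
          two_mul]
    _ = Fintype.card P := by simp

end OrbitRep

lemma setOf_antitone_inter_Icc_mem_nhds {ι : Type*} [PartialOrder ι] [Finite ι]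
    {f₀ : ι → ℝ} (hf₀ : StrictAnti f₀) (h0 : ∀ i, 0 < f₀ i) (h1 : ∀ i, f₀ i < 1) :
    {f | Antitone f} ∩ Set.Icc 0 1 ∈ 𝓝 f₀ := by
  have hcont (i : ι) : ContinuousAt (fun f : ι → ℝ => f i) f₀ :=
    (continuous_apply i).continuousAt
  have hanti : ∀ᶠ f in 𝓝 f₀, ∀ i j, i < j → f j < f i := by
    refine eventually_all.2 fun i => eventually_all.2 fun j => ?_
    by_cases hij : i < j
    · filter_upwards [(hcont j).eventually_lt (hcont i) (hf₀ hij)] with f hf using fun _ => hf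
    · exact Eventually.of_forall fun _ h => absurd h hij
  filter_upwards [hanti,
    eventually_all.2 fun i => continuousAt_const.eventually_lt (hcont i) (h0 i),
    eventually_all.2 fun i => (hcont i).eventually_lt continuousAt_const (h1 i)]
    with f hf hf0 hf1
  exact ⟨StrictAnti.antitone fun i j hij => hf i j hij, fun i => (hf0 i).le,
    fun i => (hf1 i).le⟩

lemma strictMono_ncard_Iio {ι : Type*} [Preorder ι] [Finite ι] :
    StrictMono fun i : ι => (Set.Iio i).ncard :=
  fun _ _ h => Set.ncard_lt_ncard (Set.Iio_ssubset_Iio h)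

section Polytope

variable {P : Type*} [Fintype P] (φ : P → P)

noncomputable def complExtend (x : OrbitRep φ → ℝ) (p : P) : ℝ :=
  if h : IsOrbitRep φ p then x ⟨p, h⟩
  else if h' : IsOrbitRep φ (φ p) then 1 - x ⟨φ p, h'⟩ else 1 / 2

variable {φ}

lemma complExtend_of_isOrbitRep (x : OrbitRep φ → ℝ) (p : OrbitRep φ) :
    complExtend φ x p = x p :=
  dif_pos p.2

lemma complExtend_apply_add (hφ : Involutive φ) (x : OrbitRep φ → ℝ) (p : P) :
    complExtend φ x (φ p) + complExtend φ x p = 1 := by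
  by_cases h : IsOrbitRep φ p
  · have h' : IsOrbitRep φ (φ (φ p)) := by rwa [hφ p]
    simp only [complExtend, dif_pos h, dif_neg (not_isOrbitRep_of_isOrbitRep_apply hφ h'),
      hφ p]
    ring
  by_cases h' : IsOrbitRep φ (φ p)
  · simp only [complExtend, dif_pos h', dif_neg h]
    ring
  · rw [apply_eq_self_of_not_isOrbitRep hφ h h']
    simp only [complExtend, dif_neg h, dif_neg h']
    norm_num

lemma complExtend_restrict (hφ : Involutive φ) {f : P → ℝ} (hf : ∀ p, f (φ p) + f p = 1) :
    complExtend φ (fun p => f p) = f := by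
  funext p
  by_cases h : IsOrbitRep φ p
  · exact dif_pos h
  by_cases h' : IsOrbitRep φ (φ p)
  · simp only [complExtend, dif_neg h, dif_pos h']
    linarith [hf p]
  · have hp := apply_eq_self_of_not_isOrbitRep hφ h h'
    have := hf p
    rw [hp] at this
    simp only [complExtend, dif_neg h, dif_neg h']
    linarith

lemma continuous_complExtend : Continuous (complExtend φ) :=
  continuous_pi fun p => by unfold complExtend; split_ifs <;> fun_prop

lemma complExtend_add_smul {a b : ℝ} (hab : a + b = 1) (x y : OrbitRep φ → ℝ) :
    complExtend φ (a • x + b • y) = a • complExtend φ x + b • complExtend φ y := by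
  funext p
  simp only [complExtend, Pi.add_apply, Pi.smul_apply, smul_eq_mul]
  split_ifs
  · rfl
  · linear_combination -hab
  · linear_combination -hab / 2

variable (φ) [PartialOrder P]

def scPolytope : Set (OrbitRep φ → ℝ) :=
  complExtend φ ⁻¹' ({f | Antitone f} ∩ Set.Icc 0 1)

lemma convex_scPolytope : Convex ℝ (scPolytope φ) := by
  have hconv : Convex ℝ ({f : P → ℝ | Antitone f} ∩ Set.Icc 0 1) := by
    refine Convex.inter (fun f hf g hg a b ha hb _ p q hpq => ?_) (convex_Icc 0 1)
    simp only [Pi.add_apply, Pi.smul_apply, smul_eq_mul]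
    gcongr
    exacts [hf hpq, hg hpq]
  intro x hx y hy a b ha hb hab
  simp only [scPolytope, Set.mem_preimage, complExtend_add_smul hab]
  exact hconv hx hy ha hb hab

lemma isClosed_scPolytope : IsClosed (scPolytope φ) :=
  (isClosed_antitone.inter isClosed_Icc).preimage continuous_complExtend

lemma scPolytope_subset_Icc : scPolytope φ ⊆ Set.Icc 0 1 := fun x hx =>
  ⟨fun p => (complExtend_of_isOrbitRep x p).symm ▸ hx.2.1 p,
    fun p => (complExtend_of_isOrbitRep x p) ▸ hx.2.2 p⟩

/-- The center is `sigmoid ∘ h` with `h p = r (φ p) - r p` for a strictly monotone `r`: it is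
strictly antitone with values in `(0, 1)`, and `h ∘ φ = -h` gives `f ∘ φ = 1 - f`. -/
lemma exists_scPolytope_mem_nhds (hφ : Involutive φ) (hφ' : Antitone φ) :
    ∃ x, scPolytope φ ∈ 𝓝 x := by
  set r : P → ℝ := fun p => (Set.Iio p).ncard
  have hr : StrictMono r := fun _ _ h => Nat.cast_lt.2 (strictMono_ncard_Iio h)
  set f₀ : P → ℝ := fun p => Real.sigmoid (r (φ p) - r p)
  have hf₀ : StrictAnti f₀ := fun p q h => Real.sigmoid_lt (by
    linarith [hr h, hr ((hφ'.strictAnti_of_injective hφ.injective) h)])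
  have hsum (p : P) : f₀ (φ p) + f₀ p = 1 := by
    simp only [f₀, hφ p, ← neg_sub (r (φ p)), Real.sigmoid_neg]
    ring
  refine ⟨fun p => f₀ p, continuous_complExtend.continuousAt.preimage_mem_nhds ?_⟩
  rw [complExtend_restrict hφ hsum]
  exact setOf_antitone_inter_Icc_mem_nhds hf₀ (fun _ => Real.sigmoid_pos _)
    (fun _ => Real.sigmoid_lt_one _)

lemma volume_real_scPolytope_pos (hφ : Involutive φ) (hφ' : Antitone φ) :
    0 < volume.real (scPolytope φ) := by
  obtain ⟨x, hx⟩ := exists_scPolytope_mem_nhds φ hφ hφ'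
  exact ENNReal.toReal_pos (Measure.measure_pos_of_mem_nhds volume hx).ne'
    ((Metric.isBounded_Icc 0 1).subset (scPolytope_subset_Icc φ)).measure_lt_top.ne

end Polytope

section Ideals

variable {P : Type*} {n : ℕ}

def height [DecidableEq P] (I : Finset (P × Fin n)) (p : P) : ℕ :=
  #{j | (p, j) ∈ I}

lemma height_le [DecidableEq P] (I : Finset (P × Fin n)) (p : P) : height I p ≤ n :=
  (card_filter_le _ _).trans_eq (card_fin n)

lemma lt_height_iff [PartialOrder P] [DecidableEq P] {I : Finset (P × Fin n)} (hI : IsIdeal I)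
    (p : P) (j : Fin n) :
    (j : ℕ) < height I p ↔ (p, j) ∈ I :=
  Fin.lt_card_filter_univ_iff_apply_of_imp _ fun _ _ hji hi => hI _ hi _ ⟨le_rfl, hji⟩

lemma antitone_height [PartialOrder P] [DecidableEq P] {I : Finset (P × Fin n)} (hI : IsIdeal I) :
    Antitone (height I) :=
  fun _ _ hpq => card_le_card fun j hj => by
    simp only [mem_filter, mem_univ, true_and] at hj ⊢
    exact hI _ hj _ ⟨hpq, le_rfl⟩

lemma height_apply_add [PartialOrder P] [DecidableEq P] {φ : P → P} {I : Finset (P × Fin n)}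
    (hI : IsSCIdeal (Prod.map φ Fin.rev) I) (p : P) : height I (φ p) + height I p = n := by
  have hrev : height I p = #{j | (φ p, j) ∉ I} :=
    card_nbij' Fin.rev Fin.rev
      (fun j hj => by simpa using (hI.2 (p, j)).1 (by simpa using hj))
      (fun j hj => by simpa using (hI.2 (p, j.rev)).2 (by simpa using hj))
      (fun j _ => Fin.rev_rev j) (fun j _ => Fin.rev_rev j)
  rw [hrev, height, card_filter_add_card_filter_not, card_univ, Fintype.card_fin]

variable (n) in
noncomputable def idealBelow [Fintype P] (F : P → ℝ) : Finset (P × Fin n) :=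
  {a | (a.2 : ℝ) < F a.1}

lemma mem_idealBelow [Fintype P] {F : P → ℝ} {a : P × Fin n} :
    a ∈ idealBelow n F ↔ (a.2 : ℝ) < F a.1 := by
  simp [idealBelow]

lemma isSCIdeal_idealBelow [PartialOrder P] [Fintype P] {φ : P → P} {F : P → ℝ}
    (hF : Antitone F) (hint : ∀ p, ∃ z : ℤ, F p = z) (hsum : ∀ p, F (φ p) + F p = n) :
    IsSCIdeal (Prod.map φ Fin.rev) (idealBelow n F) := by
  refine ⟨fun a ha b hab => ?_, fun a => ?_⟩
  · rw [mem_idealBelow] at ha ⊢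
    exact lt_of_le_of_lt (Nat.cast_le.2 hab.2) (ha.trans_le (hF hab.1))
  · obtain ⟨z, hz⟩ := hint a.1
    have hsucc : ((a.2 : ℕ) : ℝ) < z ↔ ((a.2 : ℕ) : ℝ) + 1 ≤ z := by norm_cast
    simp only [mem_idealBelow, Prod.map_fst, Prod.map_snd, Fin.val_rev, not_lt,
      Nat.cast_sub a.2.isLt, Nat.cast_succ, hz, hsucc]
    constructor <;> intro h <;> linarith [hsum a.1]

lemma height_idealBelow [Fintype P] [DecidableEq P] {F : P → ℝ} {p : P} (h0 : 0 ≤ F p)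
    (hn : F p ≤ n) (hint : ∃ z : ℤ, F p = z) : (height (idealBelow n F) p : ℝ) = F p := by
  obtain ⟨z, hz⟩ := hint
  lift z to ℕ using (by exact_mod_cast hz ▸ h0)
  rw [Int.cast_natCast] at hz
  have hzn : z ≤ n := by exact_mod_cast hz ▸ hn
  have : height (idealBelow n F) p = #{j : Fin n | (j : ℕ) < z} := by
    simp only [height, mem_idealBelow, hz, Nat.cast_lt]
  rw [this, Fin.card_filter_val_lt, min_eq_right hzn, hz]

lemma idealBelow_height [PartialOrder P] [Fintype P] [DecidableEq P] {I : Finset (P × Fin n)}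
    (hI : IsIdeal I) :
    idealBelow n (fun p => (height I p : ℝ)) = I := by
  ext ⟨p, j⟩
  rw [mem_idealBelow, Nat.cast_lt, lt_height_iff hI]

end Ideals

section Counting

open BoxIntegral.unitPartition Submodule

variable {P : Type*} [PartialOrder P] [Fintype P] [DecidableEq P] {φ : P → P} {n : ℕ}
  [NeZero n]

local notation "ℤ^" ι:max => (span ℤ (Set.range (Pi.basisFun ℝ ι)) : Set (ι → ℝ))

omit [NeZero n] in
lemma mem_inv_smul_intLattice_iff [NeZero n] {ι : Type*} [Finite ι] {v : ι → ℝ} :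
    v ∈ (n : ℝ)⁻¹ • ℤ^ι ↔ ∀ i, ∃ z : ℤ, n * v i = z := by
  rw [← coe_pointwise_smul, SetLike.mem_coe, mem_smul_span_iff]
  simp [eq_comm]

omit [PartialOrder P] [DecidableEq P] in
lemma exists_intCast_eq_mul_complExtend (hφ : Involutive φ) (hpar : Even n ∨ ∀ p, φ p ≠ p)
    {x : OrbitRep φ → ℝ} (hx : x ∈ (n : ℝ)⁻¹ • ℤ^(OrbitRep φ)) (p : P) :
    ∃ z : ℤ, n * complExtend φ x p = z := by
  rw [mem_inv_smul_intLattice_iff] at hx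
  unfold complExtend
  split_ifs with h h'
  · exact hx ⟨p, h⟩
  · obtain ⟨z, hz⟩ := hx ⟨φ p, h'⟩
    exact ⟨n - z, by rw [mul_sub, hz]; push_cast; ring⟩
  · rcases hpar with ⟨k, hk⟩ | hfree
    · exact ⟨k, by rw [hk]; push_cast; ring⟩
    · exact absurd (apply_eq_self_of_not_isOrbitRep hφ h h') (hfree p)

lemma complExtend_height_div (hφ : Involutive φ) {I : Finset (P × Fin n)}
    (hI : IsSCIdeal (Prod.map φ Fin.rev) I) :
    complExtend φ (fun r => (height I r : ℝ) / n) = fun p => (height I p : ℝ) / n :=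
  complExtend_restrict (f := fun p => (height I p : ℝ) / n) hφ fun p => by
    rw [← add_div, ← Nat.cast_add, height_apply_add hI, div_self (NeZero.ne _)]

lemma height_div_mem_scPolytope_inter (hφ : Involutive φ) {I : Finset (P × Fin n)}
    (hI : IsSCIdeal (Prod.map φ Fin.rev) I) :
    (fun r : OrbitRep φ => (height I r : ℝ) / n) ∈
      scPolytope φ ∩ (n : ℝ)⁻¹ • ℤ^(OrbitRep φ) := by
  refine ⟨?_, mem_inv_smul_intLattice_iff.2 fun r =>
    ⟨height I r, by rw [mul_div_cancel₀ _ (NeZero.ne _), Int.cast_natCast]⟩⟩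
  simp only [scPolytope, Set.mem_preimage, complExtend_height_div hφ hI]
  refine ⟨fun p q hpq => ?_, fun p => by positivity, fun p => ?_⟩
  · exact div_le_div_of_nonneg_right (Nat.cast_le.2 (antitone_height hI.1 hpq)) n.cast_nonneg
  · exact div_le_one_of_le₀ (Nat.cast_le.2 (height_le I p)) n.cast_nonneg

theorem card_scIdeals_eq_card_scPolytope_inter (hφ : Involutive φ)
    (hpar : Even n ∨ ∀ p, φ p ≠ p) :
    Nat.card {I : Finset (P × Fin n) // IsSCIdeal (Prod.map φ Fin.rev) I} =
      Nat.card ↑(scPolytope φ ∩ (n : ℝ)⁻¹ • ℤ^(OrbitRep φ)) := by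
  have hn : (n : ℝ) ≠ 0 := NeZero.ne _
  have hF {x} (hx : x ∈ scPolytope φ ∩ (n : ℝ)⁻¹ • ℤ^(OrbitRep φ)) (p : P) :
      0 ≤ n * complExtend φ x p ∧ n * complExtend φ x p ≤ n :=
    ⟨mul_nonneg n.cast_nonneg (hx.1.2.1 p), mul_le_of_le_one_right n.cast_nonneg (hx.1.2.2 p)⟩
  refine Nat.card_congr
    { toFun := fun I => ⟨_, height_div_mem_scPolytope_inter hφ I.2⟩
      invFun := fun x => ⟨idealBelow n fun p => n * complExtend φ x p,
        isSCIdeal_idealBelow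
          (fun p q hpq => mul_le_mul_of_nonneg_left (x.2.1.1 hpq) n.cast_nonneg)
          (exists_intCast_eq_mul_complExtend hφ hpar x.2.2)
          (fun p => by rw [← mul_add, complExtend_apply_add hφ, mul_one])⟩
      left_inv := fun I => Subtype.ext ?_
      right_inv := fun x => Subtype.ext (funext fun r => ?_) }
  · simp only [complExtend_height_div hφ I.2, mul_div_cancel₀ _ hn]
    exact idealBelow_height I.2.1
  · simp only
    rw [height_idealBelow (F := fun p => n * complExtend φ x p) (hF x.2 r).1 (hF x.2 r).2
      (exists_intCast_eq_mul_complExtend hφ hpar x.2.2 r), complExtend_of_isOrbitRep,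
      mul_div_cancel_left₀ _ hn]

end Counting

theorem tendsto_card_scIdeals_div_pow {P : Type*} [PartialOrder P] [Fintype P] [DecidableEq P]
    {φ : P → P} (hφ : Involutive φ) :
    Tendsto (fun n : ℕ => (Nat.card {I : Finset (P × Fin n) //
        IsSCIdeal (Prod.map φ Fin.rev) I} : ℝ) / (n : ℝ) ^ Fintype.card (OrbitRep φ))
      (atTop ⊓ 𝓟 {n | Even n ∨ ∀ p, φ p ≠ p}) (𝓝 (volume.real (scPolytope φ))) := by
  have hlim := tendsto_card_div_pow_atTop_volume (scPolytope φ)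
    ((Metric.isBounded_Icc 0 1).subset (scPolytope_subset_Icc φ))
    (isClosed_scPolytope φ).measurableSet ((convex_scPolytope φ).addHaar_frontier volume)
  refine (hlim.mono_left inf_le_left).congr' ?_
  filter_upwards [inf_le_left (a := atTop) (eventually_ne_atTop 0),
    mem_inf_of_right (mem_principal_self _)] with n hn hpar
  have : NeZero n := ⟨hn⟩
  rw [card_scIdeals_eq_card_scPolytope_inter hφ hpar]

section ChainProduct

variable {m : ℕ} (ℓ : Fin m → ℕ)

lemma involutive_chainRev : Involutive (chainRev ℓ) :=
  fun a => funext fun i => Fin.rev_rev (a i)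

lemma antitone_chainRev : Antitone (chainRev ℓ) :=
  fun _ _ h i => Fin.rev_le_rev.2 (h i)

lemma card_fixedPoints_chainRev_le_one : Nat.card (fixedPoints (chainRev ℓ)) ≤ 1 := by
  refine Finite.card_le_one_iff_subsingleton.2
    ⟨fun a b => Subtype.ext (funext fun i => Fin.ext ?_)⟩
  have ha := congrArg Fin.val (congrFun (a.2 : chainRev ℓ a = a) i)
  have hb := congrArg Fin.val (congrFun (b.2 : chainRev ℓ b = b) i)
  simp only [chainRev, Fin.val_rev] at ha hb
  omega

lemma two_mul_card_orbitRep_chainRev_add_card_fixedPoints :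
    2 * Fintype.card (OrbitRep (chainRev ℓ)) + Nat.card (fixedPoints (chainRev ℓ)) =
      ∏ i, ℓ i := by
  rw [two_mul_card_orbitRep_add_card_fixedPoints (involutive_chainRev ℓ)]
  simp

lemma card_orbitRep_chainRev : Fintype.card (OrbitRep (chainRev ℓ)) = (∏ i, ℓ i) / 2 := by
  have hcount := two_mul_card_orbitRep_chainRev_add_card_fixedPoints ℓ
  have hfix := card_fixedPoints_chainRev_le_one ℓ
  omega

lemma chainRev_ne_self_of_even (h : Even (∏ i, ℓ i)) (a : ∀ i, Fin (ℓ i)) :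
    chainRev ℓ a ≠ a := by
  intro ha
  have : Nonempty (fixedPoints (chainRev ℓ)) := ⟨⟨a, ha⟩⟩
  have hpos := Nat.card_pos (α := fixedPoints (chainRev ℓ))
  have hcount := two_mul_card_orbitRep_chainRev_add_card_fixedPoints ℓ
  have hfix := card_fixedPoints_chainRev_le_one ℓ
  obtain ⟨k, hk⟩ := h
  omega

end ChainProduct

theorem scIdeals_count_asymptotic_general (m : ℕ) (ℓ : Fin m → ℕ) :
    ∃ C : ℝ, 0 < C ∧
      (Even (∏ i, ℓ i) →
        Filter.Tendsto
          (fun n : ℕ =>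
            (Nat.card {I : Finset ((∀ i, Fin (ℓ i)) × Fin n) //
                IsSCIdeal (prodRevMix ℓ n) I} : ℝ) / (n : ℝ) ^ ((∏ i, ℓ i) / 2))
          Filter.atTop (nhds C)) ∧
      (¬ Even (∏ i, ℓ i) →
        Filter.Tendsto
          (fun n : ℕ =>
            (Nat.card {I : Finset ((∀ i, Fin (ℓ i)) × Fin n) //
                IsSCIdeal (prodRevMix ℓ n) I} : ℝ) / (n : ℝ) ^ ((∏ i, ℓ i) / 2))
          (Filter.atTop ⊓ Filter.principal {n : ℕ | Even n}) (nhds C)) := by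
  have hlim := tendsto_card_scIdeals_div_pow (involutive_chainRev ℓ)
  rw [card_orbitRep_chainRev] at hlim
  refine ⟨_, volume_real_scPolytope_pos _ (involutive_chainRev ℓ) (antitone_chainRev ℓ),
    fun heven => ?_, fun _ => hlim.mono_left (inf_le_inf_left _ (principal_mono.2 fun _ => .inl))⟩
  have hall : {n : ℕ | Even n ∨ ∀ a, chainRev ℓ a ≠ a} = Set.univ :=
    Set.eq_univ_of_forall fun _ => .inr (chainRev_ne_self_of_even ℓ heven)
  rwa [hall, principal_univ, inf_top_eq] at hlim

/-- With `ℓ₁, …, ℓ_{d-1}` fixed positive integers and `k = ⌊ℓ₁⋯ℓ_{d-1}/2⌋`, the number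
`N(n)` of self-complementary ideals of `[ℓ₁] × ⋯ × [ℓ_{d-1}] × [n]` satisfies
`N(n) / n^k → C` for some constant `C > 0`, where `n` ranges over all positive integers
if `ℓ₁⋯ℓ_{d-1}` is even and over all even positive integers otherwise. -/
theorem scIdeals_count_asymptotic (m : ℕ) (ℓ : Fin m → ℕ) (hpos : ∀ i, 0 < ℓ i) :
    ∃ C : ℝ, 0 < C ∧
      (Even (∏ i, ℓ i) →
        Filter.Tendsto
          (fun n : ℕ =>
            (Nat.card {I : Finset ((∀ i, Fin (ℓ i)) × Fin n) //
                IsSCIdeal (prodRevMix ℓ n) I} : ℝ) / (n : ℝ) ^ ((∏ i, ℓ i) / 2))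
          Filter.atTop (nhds C)) ∧
      (¬ Even (∏ i, ℓ i) →
        Filter.Tendsto
          (fun n : ℕ =>
            (Nat.card {I : Finset ((∀ i, Fin (ℓ i)) × Fin n) //
                IsSCIdeal (prodRevMix ℓ n) I} : ℝ) / (n : ℝ) ^ ((∏ i, ℓ i) / 2))
          (Filter.atTop ⊓ Filter.principal {n : ℕ | Even n}) (nhds C)) :=
  scIdeals_count_asymptotic_general m ℓ
end

section
/- Let n and d be positive integers with d ≥ 2. Then the number of ideals (i.e. downward-closed subsets, not necessarily self-complementary) of [n]^d is at most 4^(n^(d−1)). -/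
open Finset

/-!
An ideal `I` of `[n]^(k+2)` is determined by its column heights
`h z = #{j | (j, z) ∈ I}` for `z ∈ [n]^(k+1)`, and `h` is antitone. Cutting `[n]^(k+1)` into
`n^k` lines of length `n`, the restriction of `h` to a line is an antitone sequence
`[n] → {0, …, n}`. Adding `n - 1 - i` to its `i`-th term makes such a sequence strictly
decreasing with values below `2n`, so it is determined by its set of values: there are at most
`2^(2n) = 4^n` of them, hence at most `(4^n)^(n^k)` ideals.
-/

theorem card_antitone_fin_le (k m : ℕ) :
    Nat.card {f : Fin k → Fin (m + 1) // Antitone f} ≤ 2 ^ (m + k) := by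
  let shear (f : Fin k → Fin (m + 1)) (i : Fin k) : Fin (m + k) :=
    ⟨f i + (k - 1 - i), by omega⟩
  have shear_strictAnti {f : Fin k → Fin (m + 1)} (hf : Antitone f) : StrictAnti (shear f) :=
    fun i j hij => by
      have hfij : (f j : ℕ) ≤ f i := hf hij.le
      simp only [shear, Fin.mk_lt_mk]
      omega
  have range_shear_injective :
      Function.Injective fun f : {f : Fin k → Fin (m + 1) // Antitone f} => Set.range (shear f) := by
    intro f g hfg
    have hshear := ((shear_strictAnti f.2).range_inj (shear_strictAnti g.2)).1 hfg
    ext i : 2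
    have hi := congrArg Fin.val (congrFun hshear i)
    simp only [shear] at hi
    omega
  calc _ ≤ Nat.card (Set (Fin (m + k))) := Nat.card_le_card_of_injective _ range_shear_injective
    _ = 2 ^ (m + k) := by simp [Nat.card_eq_fintype_card, Fintype.card_set]

theorem card_antitone_pi_fin_succ_le (k n m : ℕ) :
    Nat.card {h : (Fin (k + 1) → Fin n) → Fin (m + 1) // Antitone h} ≤
      2 ^ ((m + n) * n ^ k) := by
  let restrictToLines (h : {h : (Fin (k + 1) → Fin n) → Fin (m + 1) // Antitone h})
      (w : Fin k → Fin n) : {f : Fin n → Fin (m + 1) // Antitone f} :=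
    ⟨fun i => h.1 (Fin.cons i w), fun _ _ hij => h.2 (Fin.cons_le_cons.2 ⟨hij, le_rfl⟩)⟩
  have restrictToLines_injective : Function.Injective restrictToLines := by
    intro h h' e
    ext z : 2
    rw [← Fin.cons_self_tail z]
    exact congrArg (fun f => f.1 (z 0)) (congrFun e (Fin.tail z))
  calc _ ≤ Nat.card ((Fin k → Fin n) → {f : Fin n → Fin (m + 1) // Antitone f}) :=
        Nat.card_le_card_of_injective _ restrictToLines_injective
    _ = Nat.card {f : Fin n → Fin (m + 1) // Antitone f} ^ n ^ k := by
        simp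
    _ ≤ (2 ^ (m + n)) ^ n ^ k := Nat.pow_le_pow_left (card_antitone_fin_le n m) _
    _ = 2 ^ ((m + n) * n ^ k) := (pow_mul _ _ _).symm

theorem Fin.mem_iff_lt_card_of_isLowerSet {n : ℕ} {S : Finset (Fin n)}
    (hS : IsLowerSet (S : Set (Fin n))) (j : Fin n) : j ∈ S ↔ (j : ℕ) < #S := by
  constructor
  · intro hj
    have := card_le_card fun b hb => hS (mem_Iic.1 hb) hj
    rw [Fin.card_Iic] at this
    omega
  · intro hj
    by_contra hjS
    have := card_le_card fun a (ha : a ∈ S) =>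
      mem_Iio.2 (lt_of_not_ge fun hja => hjS (hS hja ha))
    rw [Fin.card_Iio] at this
    omega

section ColumnHeight

variable {k n : ℕ}

def columnHeight (I : Finset (Fin (k + 1) → Fin n)) (z : Fin k → Fin n) : Fin (n + 1) :=
  ⟨#{j | Fin.cons j z ∈ I}, Nat.lt_succ_of_le ((card_filter_le _ _).trans_eq (card_fin n))⟩

theorem IsIdeal.cons_mem_iff {I : Finset (Fin (k + 1) → Fin n)} (hI : IsIdeal I)
    (j : Fin n) (z : Fin k → Fin n) : Fin.cons j z ∈ I ↔ (j : ℕ) < columnHeight I z := by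
  change _ ↔ (j : ℕ) < #{j | Fin.cons j z ∈ I}
  have hlower : IsLowerSet (({j | Fin.cons j z ∈ I} : Finset (Fin n)) : Set (Fin n)) := by
    intro a b hba ha
    simp only [coe_filter, mem_univ, true_and, Set.mem_ofPred_eq] at ha ⊢
    exact hI _ ha _ (Fin.cons_le_cons.2 ⟨hba, le_rfl⟩)
  simpa only [mem_filter, mem_univ, true_and] using Fin.mem_iff_lt_card_of_isLowerSet hlower j

theorem IsIdeal.columnHeight_antitone {I : Finset (Fin (k + 1) → Fin n)} (hI : IsIdeal I) :
    Antitone (columnHeight I) := by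
  intro z z' hzz'
  refine Fin.mk_le_mk.2 (card_le_card fun j => ?_)
  simp only [mem_filter, mem_univ, true_and]
  exact fun hj => hI _ hj _ (Fin.cons_le_cons.2 ⟨le_rfl, hzz'⟩)

theorem IsIdeal.ext_of_columnHeight {I J : Finset (Fin (k + 1) → Fin n)} (hI : IsIdeal I)
    (hJ : IsIdeal J) (h : columnHeight I = columnHeight J) : I = J := by
  ext x
  rw [← Fin.cons_self_tail x, hI.cons_mem_iff, hJ.cons_mem_iff, h]

end ColumnHeight

theorem card_ideals_cube_le_general (n d : ℕ) (hd : 2 ≤ d) :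
    Nat.card {I : Finset (Fin d → Fin n) // IsIdeal I} ≤ 4 ^ n ^ (d - 1) := by
  obtain ⟨k, rfl⟩ : ∃ k, d = k + 2 := ⟨d - 2, by omega⟩
  calc Nat.card {I : Finset (Fin (k + 2) → Fin n) // IsIdeal I}
      ≤ Nat.card {h : (Fin (k + 1) → Fin n) → Fin (n + 1) // Antitone h} :=
        Nat.card_le_card_of_injective (fun I => ⟨columnHeight I.1, I.2.columnHeight_antitone⟩)
          fun I J hIJ => Subtype.ext <| I.2.ext_of_columnHeight J.2 (congrArg Subtype.val hIJ)
    _ ≤ 2 ^ ((n + n) * n ^ k) := card_antitone_pi_fin_succ_le k n n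
    _ = 4 ^ n ^ (k + 2 - 1) := by
        rw [show k + 2 - 1 = k + 1 by omega, ← two_mul, mul_assoc, ← pow_succ', pow_mul]
        norm_num

/-- For `d ≥ 2`, the number of ideals of `[n]^d` is at most `4^(n^(d-1))`. -/
theorem card_ideals_cube_le (n d : ℕ) (hn : 0 < n) (hd : 2 ≤ d) :
    Nat.card {I : Finset (Fin d → Fin n) // IsIdeal I} ≤ 4 ^ n ^ (d - 1) :=
  card_ideals_cube_le_general n d hd
end

section
/- Let d ≥ 2 be a fixed integer, and for an even positive integer n let N(n) denote the number of self-complementary ideals of [n]^d (the d-fold product of chains of length n). Then log N(n) = Θ(n^(d−1)) as n tends to infinity over even positive integers; that is, there exist real constants c₁, c₂ > 0 such that for every even integer n ≥ 2, c₁·n^(d−1) ≤ log N(n) ≤ c₂·n^(d−1). -/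
open Finset

/-- The order-reversing involution on `[n]^d`. -/
def cubeRev (d n : ℕ) (a : Fin d → Fin n) : Fin d → Fin n := fun i => (a i).rev

/-- A down-closed subset of `Fin N` is an initial segment determined by its cardinality. -/
lemma downset_mem_iff {N : ℕ} (S : Finset (Fin N)) (h : ∀ a ∈ S, ∀ b, b ≤ a → b ∈ S)
    (t : Fin N) : t ∈ S ↔ t.val < S.card := by
  constructor
  · intro ht
    have hsub : Finset.Iic t ⊆ S := fun b hb => h t ht b (Finset.mem_Iic.1 hb)
    have h1 := Finset.card_le_card hsub
    rw [Fin.card_Iic] at h1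
    omega
  · intro ht
    by_contra hts
    have hsub : S ⊆ Finset.Iio t := by
      intro b hb
      refine Finset.mem_Iio.2 ?_
      by_contra hbt
      exact hts (h b hb t (le_of_not_gt hbt))
    have h1 := Finset.card_le_card hsub
    rw [Fin.card_Iio] at h1
    omega

/-- Two strictly antitone functions `Fin N → α` with the same image coincide. -/
lemma strictAnti_eq_of_image_eq {N : ℕ} {α : Type*} [LinearOrder α] [DecidableEq α] {f g : Fin N → α}
    (hf : StrictAnti f) (hg : StrictAnti g)
    (h : Finset.image f univ = Finset.image g univ) : f = g := by
  have hfr : StrictMono (f ∘ Fin.rev) := fun i j hij => hf (Fin.rev_lt_rev.2 hij)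
  have hgr : StrictMono (g ∘ Fin.rev) := fun i j hij => hg (Fin.rev_lt_rev.2 hij)
  have himg : Finset.image (f ∘ Fin.rev) univ = Finset.image f univ := by
    rw [← Finset.image_image]
    congr 1
    exact Finset.image_univ_of_surjective Fin.rev_surjective
  have himg' : Finset.image (g ∘ Fin.rev) univ = Finset.image g univ := by
    rw [← Finset.image_image]
    congr 1
    exact Finset.image_univ_of_surjective Fin.rev_surjective
  have hcard : (Finset.image f univ).card = N := by
    rw [Finset.card_image_of_injective _ (hf.injective), Finset.card_univ, Fintype.card_fin]
  have h1 : (f ∘ Fin.rev) = (Finset.image f univ).orderEmbOfFin hcard := by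
    refine Finset.orderEmbOfFin_unique hcard (fun x => ?_) hfr
    rw [← himg]; exact Finset.mem_image_of_mem _ (Finset.mem_univ _)
  have h2 : (g ∘ Fin.rev) = (Finset.image f univ).orderEmbOfFin hcard := by
    refine Finset.orderEmbOfFin_unique hcard (fun x => ?_) hgr
    rw [h, ← himg']; exact Finset.mem_image_of_mem _ (Finset.mem_univ _)
  have : (f ∘ Fin.rev) = (g ∘ Fin.rev) := h1.trans h2.symm
  funext i
  have := congrFun this i.rev
  simpa using this

variable {k m : ℕ}

/-- auxiliary point: coordinates `(s, t, u)`. -/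
def pt (k m : ℕ) (u : Fin k → Fin (2*m)) (t s : Fin (2*m)) : Fin (k+2) → Fin (2*m) :=
  fun i => if h0 : i.val = 0 then s else if h1 : i.val = 1 then t
    else u ⟨i.val - 2, by have := i.isLt; omega⟩

def uOf (a : Fin (k+2) → Fin (2*m)) : Fin k → Fin (2*m) :=
  fun j => a ⟨j.val + 2, by have := j.isLt; omega⟩

lemma pt_apply_self (a : Fin (k+2) → Fin (2*m)) : pt k m (uOf a) (a 1) (a 0) = a := by
  funext i
  by_cases h0 : i.val = 0
  · have hi : i = 0 := Fin.ext (by simpa using h0)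
    subst hi
    simp [pt]
  by_cases h1 : i.val = 1
  · have hi : i = 1 := Fin.ext (by simpa using h1)
    subst hi
    simp [pt]
  · simp only [pt, uOf, dif_neg h0, dif_neg h1]
    congr 1
    exact Fin.ext (by simp; omega)

lemma pt_mono (u : Fin k → Fin (2*m)) {t t' s s' : Fin (2*m)} (ht : t ≤ t') (hs : s ≤ s') :
    pt k m u t s ≤ pt k m u t' s' := by
  intro i
  unfold pt
  split
  · exact hs
  · split
    · exact ht
    · exact le_refl _


noncomputable def Hgt (I : Finset (Fin (k+2) → Fin (2*m))) (u : Fin k → Fin (2*m))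
    (t : Fin (2*m)) : ℕ :=
  (univ.filter (fun s => pt k m u t s ∈ I)).card

lemma Hgt_le (I : Finset (Fin (k+2) → Fin (2*m))) (u : Fin k → Fin (2*m)) (t : Fin (2*m)) :
    Hgt I u t ≤ 2*m := by
  classical
  calc Hgt I u t ≤ (univ : Finset (Fin (2*m))).card := Finset.card_filter_le _ _
  _ = 2*m := by simp

lemma mem_iff_lt_Hgt {I : Finset (Fin (k+2) → Fin (2*m))} (hI : IsIdeal I)
    (a : Fin (k+2) → Fin (2*m)) : a ∈ I ↔ (a 0).val < Hgt I (uOf a) (a 1) := by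
  classical
  have hdc : ∀ s ∈ (univ.filter (fun s => pt k m (uOf a) (a 1) s ∈ I)), ∀ s', s' ≤ s →
      s' ∈ (univ.filter (fun s => pt k m (uOf a) (a 1) s ∈ I)) := by
    intro s hs s' hs'
    simp only [Finset.mem_filter, Finset.mem_univ, true_and] at hs ⊢
    exact hI _ hs _ (pt_mono _ (le_refl _) hs')
  have := downset_mem_iff _ hdc (a 0)
  rw [Finset.mem_filter] at this
  simp only [Finset.mem_univ, true_and, pt_apply_self] at this
  unfold Hgt
  exact this

lemma Hgt_antitone {I : Finset (Fin (k+2) → Fin (2*m))} (hI : IsIdeal I)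
    (u : Fin k → Fin (2*m)) {t t' : Fin (2*m)} (ht : t ≤ t') : Hgt I u t' ≤ Hgt I u t := by
  classical
  apply Finset.card_le_card
  intro s hs
  simp only [Finset.mem_filter, Finset.mem_univ, true_and] at hs ⊢
  exact hI _ hs _ (pt_mono _ ht (le_refl _))

noncomputable def gfun (I : Finset (Fin (k+2) → Fin (2*m))) (u : Fin k → Fin (2*m))
    (t : Fin (2*m)) : Fin (4*m) :=
  ⟨Hgt I u t + (2*m - 1 - t.val), by
    have h1 := Hgt_le I u t
    have h2 := t.isLt
    omega⟩

lemma gfun_strictAnti {I : Finset (Fin (k+2) → Fin (2*m))} (hI : IsIdeal I)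
    (u : Fin k → Fin (2*m)) : StrictAnti (gfun I u) := by
  intro t t' htt
  have h1 := Hgt_antitone hI u (le_of_lt htt)
  have h2 : t.val < t'.val := htt
  have h3 := t'.isLt
  simp only [gfun, Fin.mk_lt_mk]
  omega

noncomputable def Theta (I : Finset (Fin (k+2) → Fin (2*m))) :
    (Fin k → Fin (2*m)) → Finset (Fin (4*m)) :=
  fun u => Finset.image (gfun I u) univ

lemma Theta_injective :
    Function.Injective (fun I : {I : Finset (Fin (k+2) → Fin (2*m)) //
      IsSCIdeal (cubeRev (k+2) (2*m)) I} => Theta I.1) := by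
  classical
  intro I J h
  have hIJ : ∀ u, gfun I.1 u = gfun J.1 u := by
    intro u
    have h' := congrFun h u
    simp only [Theta] at h'
    exact strictAnti_eq_of_image_eq (gfun_strictAnti I.2.1 u) (gfun_strictAnti J.2.1 u) h'
  have hH : ∀ u t, Hgt I.1 u t = Hgt J.1 u t := by
    intro u t
    have := congrFun (hIJ u) t
    simp only [gfun, Fin.mk.injEq] at this
    omega
  apply Subtype.ext
  apply Finset.ext
  intro a
  rw [mem_iff_lt_Hgt I.2.1, mem_iff_lt_Hgt J.2.1, hH]


lemma card_upper :
    Nat.card {I : Finset (Fin (k+2) → Fin (2*m)) // IsSCIdeal (cubeRev (k+2) (2*m)) I} ≤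
      2 ^ (4*m*(2*m)^k) := by
  classical
  have h := Nat.card_le_card_of_injective _ (Theta_injective (k := k) (m := m))
  calc Nat.card {I : Finset (Fin (k+2) → Fin (2*m)) // IsSCIdeal (cubeRev (k+2) (2*m)) I} ≤
      Nat.card ((Fin k → Fin (2*m)) → Finset (Fin (4*m))) := h
    _ = 2 ^ (4*m*(2*m)^k) := by
        rw [Nat.card_fun, Nat.card_fun]
        simp only [Nat.card_eq_fintype_card, Fintype.card_finset, Fintype.card_fin]
        rw [← pow_mul]

def iota (k : ℕ) (j : Fin k) : Fin (k+2) := ⟨j.val + 2, by have := j.isLt; omega⟩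

/-- weight `a₀ + a₁ + 2∑_{j≥2} aⱼ`. -/
def wgt (k m : ℕ) (a : Fin (k+2) → Fin (2*m)) : ℕ :=
  (a 0).val + (a 1).val + 2 * ∑ j : Fin k, (a (iota k j)).val

def Mmid (k m : ℕ) : ℕ := (k+1) * (2*m - 1)

lemma m_pos (a : Fin (k+2) → Fin (2*m)) : 1 ≤ m := by have := (a 0).isLt; omega

lemma wgt_add_rev (a : Fin (k+2) → Fin (2*m)) :
    wgt k m a + wgt k m (cubeRev (k+2) (2*m) a) = 2 * Mmid k m := by
  have hm := m_pos a
  have hterm : ∀ i, ((a i).rev).val = (2*m - 1) - (a i).val := by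
    intro i
    rw [Fin.val_rev]
    omega
  have key : (∑ j : Fin k, (a (iota k j)).val) + ∑ j : Fin k, ((a (iota k j)).rev).val
      = k * (2*m - 1) := by
    rw [← Finset.sum_add_distrib]
    have : ∀ j ∈ (univ : Finset (Fin k)),
        (a (iota k j)).val + ((a (iota k j)).rev).val = 2*m - 1 := by
      intro j _
      have := (a (iota k j)).isLt
      rw [hterm]
      omega
    rw [Finset.sum_congr rfl this, Finset.sum_const, Finset.card_univ, Fintype.card_fin,
      smul_eq_mul]
  have h0 := (a 0).isLt
  have h1 := (a 1).isLt
  unfold wgt cubeRev Mmid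
  rw [hterm 0, hterm 1]
  zify [show (a 0).val ≤ 2*m-1 by omega, show (a 1).val ≤ 2*m-1 by omega,
    show 1 ≤ 2*m by omega] at *
  linarith [key]

lemma wgt_le (a : Fin (k+2) → Fin (2*m)) : wgt k m a ≤ 2 * Mmid k m := by
  have := wgt_add_rev a
  omega

lemma wgt_rev (a : Fin (k+2) → Fin (2*m)) :
    wgt k m (cubeRev (k+2) (2*m) a) = 2 * Mmid k m - wgt k m a := by
  have := wgt_add_rev a
  omega

lemma wgt_mono {a b : Fin (k+2) → Fin (2*m)} (hab : a ≤ b) : wgt k m a ≤ wgt k m b := by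
  have h0 : (a 0).val ≤ (b 0).val := hab 0
  have h1 : (a 1).val ≤ (b 1).val := hab 1
  have hsum : (∑ j : Fin k, (a (iota k j)).val) ≤ ∑ j : Fin k, (b (iota k j)).val :=
    Finset.sum_le_sum (fun j _ => hab (iota k j))
  unfold wgt
  omega

lemma wgt_strict_mono {a b : Fin (k+2) → Fin (2*m)} (hab : a ≤ b) (hne : a ≠ b) :
    wgt k m a < wgt k m b := by
  obtain ⟨i, hi⟩ := Function.ne_iff.1 hne
  have hi' : (a i).val < (b i).val := lt_of_le_of_ne (hab i) (fun h => hi (Fin.ext h))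
  have h0 : (a 0).val ≤ (b 0).val := hab 0
  have h1 : (a 1).val ≤ (b 1).val := hab 1
  have hsum : (∑ j : Fin k, (a (iota k j)).val) ≤ ∑ j : Fin k, (b (iota k j)).val :=
    Finset.sum_le_sum (fun j _ => hab (iota k j))
  unfold wgt
  rcases Nat.lt_or_ge i.val 2 with h2 | h2
  · have : i = 0 ∨ i = 1 := by
      rcases (by omega : i.val = 0 ∨ i.val = 1) with h | h
      · exact Or.inl (Fin.ext h)
      · exact Or.inr (Fin.ext h)
    rcases this with rfl | rfl <;> omega
  · have hii : i = iota k ⟨i.val - 2, by have := i.isLt; omega⟩ := by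
      apply Fin.ext
      simp [iota]
      omega
    have hstrict : (∑ j : Fin k, (a (iota k j)).val) < ∑ j : Fin k, (b (iota k j)).val := by
      apply Finset.sum_lt_sum (f := fun j => (a (iota k j)).val) (g := fun j => (b (iota k j)).val) (fun j _ => hab (iota k j))
      exact ⟨⟨i.val - 2, by have := i.isLt; omega⟩, Finset.mem_univ _, by rw [← hii]; exact hi'⟩
    omega

def Lplus (k m : ℕ) : Finset (Fin (k+2) → Fin (2*m)) :=
  univ.filter (fun a => wgt k m a = Mmid k m ∧ (a 1).val < m)

def bigI (k m : ℕ) (S0 : Finset (Fin (k+2) → Fin (2*m))) : Finset (Fin (k+2) → Fin (2*m)) :=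
  univ.filter (fun a => wgt k m a < Mmid k m ∨ a ∈ S0 ∨
    (wgt k m a = Mmid k m ∧ m ≤ (a 1).val ∧ cubeRev (k+2) (2*m) a ∉ S0))

lemma mem_bigI {S0 : Finset (Fin (k+2) → Fin (2*m))} {a : Fin (k+2) → Fin (2*m)} :
    a ∈ bigI k m S0 ↔ (wgt k m a < Mmid k m ∨ a ∈ S0 ∨
      (wgt k m a = Mmid k m ∧ m ≤ (a 1).val ∧ cubeRev (k+2) (2*m) a ∉ S0)) := by
  simp [bigI]

lemma mem_Lplus {a : Fin (k+2) → Fin (2*m)} :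
    a ∈ Lplus k m ↔ wgt k m a = Mmid k m ∧ (a 1).val < m := by
  simp [Lplus]

lemma isIdeal_bigI {S0 : Finset (Fin (k+2) → Fin (2*m))} (hS0 : S0 ⊆ Lplus k m) :
    IsIdeal (bigI k m S0) := by
  intro a ha b hba
  rcases eq_or_ne b a with rfl | hne
  · exact ha
  have hb : wgt k m b < wgt k m a := wgt_strict_mono hba hne
  have haM : wgt k m a ≤ Mmid k m := by
    rcases mem_bigI.1 ha with h | h | h
    · omega
    · exact le_of_eq (mem_Lplus.1 (hS0 h)).1
    · exact le_of_eq h.1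
  exact mem_bigI.2 (Or.inl (by omega))

lemma cubeRev_invol (a : Fin (k+2) → Fin (2*m)) :
    cubeRev (k+2) (2*m) (cubeRev (k+2) (2*m) a) = a := by
  funext i
  simp [cubeRev]

lemma rev_one_val (a : Fin (k+2) → Fin (2*m)) :
    ((cubeRev (k+2) (2*m) a) 1).val = 2*m - 1 - (a 1).val := by
  simp [cubeRev, Fin.val_rev]
  omega

lemma sc_bigI {S0 : Finset (Fin (k+2) → Fin (2*m))} (hS0 : S0 ⊆ Lplus k m) :
    ∀ a, a ∈ bigI k m S0 ↔ cubeRev (k+2) (2*m) a ∉ bigI k m S0 := by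
  intro a
  have hm := m_pos a
  have hmem : ∀ b, b ∈ S0 → wgt k m b = Mmid k m ∧ (b 1).val < m :=
    fun b hb => mem_Lplus.1 (hS0 hb)
  set φa := cubeRev (k+2) (2*m) a with hφa
  have hrev : wgt k m φa = 2 * Mmid k m - wgt k m a := wgt_rev a
  have hle := wgt_le a
  have h1 := (a 1).isLt
  have hrev1 : (φa 1).val = 2*m - 1 - (a 1).val := rev_one_val a
  have hinvol : cubeRev (k+2) (2*m) φa = a := cubeRev_invol a
  rcases lt_trichotomy (wgt k m a) (Mmid k m) with hw | hw | hw
  · constructor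
    · intro _ hmemrev
      rcases mem_bigI.1 hmemrev with h | h | h
      · omega
      · have := (hmem _ h).1; omega
      · omega
    · intro _
      exact mem_bigI.2 (Or.inl hw)
  · -- middle layer
    rcases Nat.lt_or_ge (a 1).val m with ha1 | ha1
    · -- a ∈ L⁺ side
      have hφ1 : m ≤ (φa 1).val := by omega
      have hiff1 : a ∈ bigI k m S0 ↔ a ∈ S0 := by
        rw [mem_bigI]
        constructor
        · rintro (h | h | h)
          · omega
          · exact h
          · omega
        · exact fun h => Or.inr (Or.inl h)
      have hiff2 : φa ∈ bigI k m S0 ↔ a ∉ S0 := by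
        rw [mem_bigI]
        constructor
        · rintro (h | h | h)
          · omega
          · have := (hmem _ h).2; omega
          · rw [hinvol] at h; exact h.2.2
        · intro h
          exact Or.inr (Or.inr ⟨by omega, hφ1, by rw [hinvol]; exact h⟩)
      rw [hiff1, hiff2]
      tauto
    · -- a on the other side of the middle layer
      have hφ1 : (φa 1).val < m := by omega
      have hφw : wgt k m φa = Mmid k m := by omega
      have hiff1 : a ∈ bigI k m S0 ↔ φa ∉ S0 := by
        rw [mem_bigI]
        constructor
        · rintro (h | h | h)
          · omega
          · have := (hmem _ h).2; omega
          · exact h.2.2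
        · intro h
          exact Or.inr (Or.inr ⟨by omega, ha1, h⟩)
      have hiff2 : φa ∈ bigI k m S0 ↔ φa ∈ S0 := by
        rw [mem_bigI]
        constructor
        · rintro (h | h | h)
          · omega
          · exact h
          · omega
        · exact fun h => Or.inr (Or.inl h)
      rw [hiff1, hiff2]
  · constructor
    · intro hmema
      rcases mem_bigI.1 hmema with h | h | h
      · omega
      · have := (hmem _ h).1; omega
      · omega
    · intro hnot
      exfalso
      apply hnot
      exact mem_bigI.2 (Or.inl (by omega))

lemma bigI_recover {S0 : Finset (Fin (k+2) → Fin (2*m))} (hS0 : S0 ⊆ Lplus k m) :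
    (bigI k m S0).filter (fun a => a ∈ Lplus k m) = S0 := by
  apply Finset.ext
  intro a
  rw [Finset.mem_filter, mem_bigI, mem_Lplus]
  constructor
  · rintro ⟨h | h | h, hw, h1⟩
    · omega
    · exact h
    · omega
  · intro h
    have := mem_Lplus.1 (hS0 h)
    exact ⟨Or.inr (Or.inl h), this⟩

lemma two_pow_card_Lplus_le :
    2 ^ (Lplus k m).card ≤
      Nat.card {I : Finset (Fin (k+2) → Fin (2*m)) // IsSCIdeal (cubeRev (k+2) (2*m)) I} := by
  classical
  have hinj : Function.Injective
      (fun S' : Finset {x : Fin (k+2) → Fin (2*m) // x ∈ Lplus k m} =>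
        (⟨bigI k m (S'.map (Function.Embedding.subtype _)),
          isIdeal_bigI (fun a ha => by
            obtain ⟨x, _, rfl⟩ := Finset.mem_map.1 ha
            exact x.2),
          sc_bigI (fun a ha => by
            obtain ⟨x, _, rfl⟩ := Finset.mem_map.1 ha
            exact x.2)⟩ :
          {I : Finset (Fin (k+2) → Fin (2*m)) // IsSCIdeal (cubeRev (k+2) (2*m)) I})) := by
    intro S1 S2 h
    have h' := congrArg Subtype.val h
    simp only at h'
    have hsub1 : S1.map (Function.Embedding.subtype _) ⊆ Lplus k m := fun a ha => by
      obtain ⟨x, _, rfl⟩ := Finset.mem_map.1 ha; exact x.2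
    have hsub2 : S2.map (Function.Embedding.subtype _) ⊆ Lplus k m := fun a ha => by
      obtain ⟨x, _, rfl⟩ := Finset.mem_map.1 ha; exact x.2
    have := (bigI_recover hsub1).symm.trans (by rw [h', bigI_recover hsub2])
    exact Finset.map_injective _ this
  have hle := Nat.card_le_card_of_injective _ hinj
  calc 2 ^ (Lplus k m).card
      = Nat.card (Finset {x : Fin (k+2) → Fin (2*m) // x ∈ Lplus k m}) := by
        rw [Nat.card_eq_fintype_card, Fintype.card_finset, Fintype.card_coe]
    _ ≤ _ := hle

def Gmap (k m : ℕ) (hm : 4*k+8 ≤ m) (t : Fin (k+1) → Fin (m/(2*k+4))) :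
    Fin (k+2) → Fin (2*m) := fun i =>
  if i.val = 0 then
    ⟨2*m - 1 - ((t 0).val + 2 * ∑ j : Fin k, (t j.succ).val), by omega⟩
  else if i.val = 1 then
    ⟨k + (t 0).val, by
      have h := (Nat.le_div_iff_mul_le (by omega : 0 < 2*k+4)).1 (Nat.succ_le_of_lt (t 0).isLt)
      have h2 : ((t 0).val + 1) * (2*k+4) ≤ m := h
      nlinarith⟩
  else
    ⟨m - 1 + (t ⟨i.val - 1, by have := i.isLt; omega⟩).val, by
      have h := (Nat.le_div_iff_mul_le (by omega : 0 < 2*k+4)).1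
        (Nat.succ_le_of_lt (t ⟨i.val - 1, by have := i.isLt; omega⟩).isLt)
      have h2 : ((t ⟨i.val - 1, by have := i.isLt; omega⟩).val + 1) * (2*k+4) ≤ m := h
      have h3 : (t ⟨i.val - 1, by have := i.isLt; omega⟩).val + 1 ≤ m :=
        le_trans (Nat.le_mul_of_pos_right _ (by omega)) h2
      omega⟩

lemma Gmap_one (hm : 4*k+8 ≤ m) (t : Fin (k+1) → Fin (m/(2*k+4))) :
    ((Gmap k m hm t) 1).val = k + (t 0).val := by
  simp [Gmap]

lemma Gmap_iota (hm : 4*k+8 ≤ m) (t : Fin (k+1) → Fin (m/(2*k+4))) (j : Fin k) :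
    ((Gmap k m hm t) (iota k j)).val = m - 1 + (t j.succ).val := by
  have h2 : (iota k j).val = j.val + 2 := rfl
  simp only [Gmap, h2]
  rw [if_neg (by omega), if_neg (by omega)]
  have h3 : (⟨(iota k j).val - 1, by have := (iota k j).isLt; omega⟩ : Fin (k+1)) = j.succ := by
    apply Fin.ext
    simp [h2]
  simp [h3, h2]
  congr 2
  all_goals (apply Fin.ext; simp)

lemma Gmap_zero (hm : 4*k+8 ≤ m) (t : Fin (k+1) → Fin (m/(2*k+4))) :
    ((Gmap k m hm t) 0).val = 2*m - 1 - ((t 0).val + 2 * ∑ j : Fin k, (t j.succ).val) := by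
  simp [Gmap]

lemma sdiv_pos (hm : 4*k+8 ≤ m) : 1 ≤ m/(2*k+4) :=
  (Nat.one_le_div_iff (by omega)).2 (by omega)

lemma tsum_le (hm : 4*k+8 ≤ m) (t : Fin (k+1) → Fin (m/(2*k+4))) :
    (t 0).val + 2 * ∑ j : Fin k, (t j.succ).val ≤ m - 1 := by
  obtain ⟨u, hu⟩ : ∃ u, m/(2*k+4) = u + 1 := ⟨m/(2*k+4) - 1, by have := sdiv_pos hm; omega⟩
  have hsm : (u+1) * (2*k+4) ≤ m := by
    rw [← hu]; exact Nat.div_mul_le_self m (2*k+4)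
  have ht0 : (t 0).val ≤ u := by have := (t 0).isLt; omega
  have hsum : (∑ j : Fin k, (t j.succ).val) ≤ k * u := by
    calc (∑ j : Fin k, (t j.succ).val) ≤ ∑ _j : Fin k, u :=
          Finset.sum_le_sum (fun j _ => by have := (t j.succ).isLt; omega)
      _ = k * u := by rw [Finset.sum_const, Finset.card_univ, Fintype.card_fin, smul_eq_mul]
  have hfin : (t 0).val + 2 * (∑ j : Fin k, (t j.succ).val) < m := by
    calc (t 0).val + 2 * (∑ j : Fin k, (t j.succ).val) ≤ u + 2 * (k * u) := by linarith
      _ < m := by nlinarith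
  omega

lemma wgt_Gmap (hm : 4*k+8 ≤ m) (t : Fin (k+1) → Fin (m/(2*k+4))) :
    wgt k m (Gmap k m hm t) = Mmid k m := by
  have hX := tsum_le hm t
  unfold wgt Mmid
  rw [Gmap_zero, Gmap_one]
  have hsum : (∑ j : Fin k, ((Gmap k m hm t) (iota k j)).val)
      = k * (m-1) + ∑ j : Fin k, (t j.succ).val := by
    rw [Finset.sum_congr rfl (fun j _ => Gmap_iota hm t j), Finset.sum_add_distrib]
    congr 1
    rw [Finset.sum_const, Finset.card_univ, Fintype.card_fin, smul_eq_mul]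
  rw [hsum]
  zify [show 1 ≤ m by omega, show 1 ≤ 2*m by omega,
    show (t 0).val + 2 * ∑ j : Fin k, (t j.succ).val ≤ 2*m - 1 by omega]
  ring

lemma Gmap_mem_Lplus (hm : 4*k+8 ≤ m) (t : Fin (k+1) → Fin (m/(2*k+4))) :
    Gmap k m hm t ∈ Lplus k m := by
  rw [mem_Lplus]
  refine ⟨wgt_Gmap hm t, ?_⟩
  rw [Gmap_one]
  obtain ⟨u, hu⟩ : ∃ u, m/(2*k+4) = u + 1 := ⟨m/(2*k+4) - 1, by have := sdiv_pos hm; omega⟩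
  have hsm : (u+1) * (2*k+4) ≤ m := by
    rw [← hu]; exact Nat.div_mul_le_self m (2*k+4)
  have ht0 : (t 0).val ≤ u := by have := (t 0).isLt; omega
  nlinarith

lemma Gmap_injective (hm : 4*k+8 ≤ m) : Function.Injective (Gmap k m hm) := by
  intro t t' h
  funext j
  apply Fin.ext
  rcases Fin.eq_zero_or_eq_succ j with rfl | ⟨j', rfl⟩
  · have h1 := congrArg (fun f => (f 1).val) h
    simp only [Gmap_one] at h1
    omega
  · have h1 := congrArg (fun f => (f (iota k j')).val) h
    simp only [Gmap_iota] at h1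
    omega

lemma card_Lplus_ge (hm : 4*k+8 ≤ m) : (m/(2*k+4))^(k+1) ≤ (Lplus k m).card := by
  classical
  have hinj : Function.Injective
      (fun t : Fin (k+1) → Fin (m/(2*k+4)) =>
        (⟨Gmap k m hm t, Gmap_mem_Lplus hm t⟩ : {x // x ∈ Lplus k m})) := by
    intro t t' h
    exact Gmap_injective hm (congrArg Subtype.val h)
  have := Fintype.card_le_of_injective _ hinj
  rwa [Fintype.card_fun, Fintype.card_fin, Fintype.card_fin, Fintype.card_coe] at this

lemma m_le_smul (hm : 4*k+8 ≤ m) : m ≤ (4*k+8) * (m/(2*k+4)) := by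
  have h1 := Nat.div_add_mod m (2*k+4)
  have h2 : m % (2*k+4) < 2*k+4 := Nat.mod_lt _ (by omega)
  have h3 : 1 ≤ m/(2*k+4) := sdiv_pos hm
  nlinarith [Nat.mul_le_mul_left (2*k+4) h3]

def halfIdeal (k m : ℕ) (c : Fin (k+2)) : Finset (Fin (k+2) → Fin (2*m)) :=
  univ.filter (fun a => (a c).val < m)

lemma sc_halfIdeal (c : Fin (k+2)) : IsSCIdeal (cubeRev (k+2) (2*m)) (halfIdeal k m c) := by
  constructor
  · intro a ha b hba
    simp only [halfIdeal, Finset.mem_filter, Finset.mem_univ, true_and] at ha ⊢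
    exact lt_of_le_of_lt (hba c) ha
  · intro a
    simp only [halfIdeal, Finset.mem_filter, Finset.mem_univ, true_and, cubeRev, Fin.val_rev,
      not_lt]
    have := (a c).isLt
    omega

lemma two_le_card_sc (hm : 1 ≤ m) :
    2 ≤ Nat.card {I : Finset (Fin (k+2) → Fin (2*m)) // IsSCIdeal (cubeRev (k+2) (2*m)) I} := by
  have hnt : Nontrivial {I : Finset (Fin (k+2) → Fin (2*m)) //
      IsSCIdeal (cubeRev (k+2) (2*m)) I} := by
    refine ⟨⟨halfIdeal k m 0, sc_halfIdeal 0⟩, ⟨halfIdeal k m 1, sc_halfIdeal 1⟩, ?_⟩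
    intro h
    have h' := congrArg Subtype.val h
    simp only at h'
    have hx : (fun i : Fin (k+2) => if i.val = 0 then (⟨m, by omega⟩ : Fin (2*m))
        else ⟨0, by omega⟩) ∈ halfIdeal k m 1 := by
      simp [halfIdeal]
      omega
    have hx' : (fun i : Fin (k+2) => if i.val = 0 then (⟨m, by omega⟩ : Fin (2*m))
        else ⟨0, by omega⟩) ∉ halfIdeal k m 0 := by
      simp [halfIdeal]
    rw [h'] at hx'
    exact hx' hx
  exact Finite.one_lt_card_iff_nontrivial.2 hnt

/-- For fixed `d ≥ 2`, the logarithm of the number of self-complementary ideals of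
`[n]^d` is `Θ(n^(d-1))` as `n` runs over the even positive integers. -/
theorem log_card_scIdeals_cube_theta (d : ℕ) (hd : 2 ≤ d) :
    ∃ c₁ c₂ : ℝ, 0 < c₁ ∧ 0 < c₂ ∧
      ∀ n : ℕ, Even n → 2 ≤ n →
        c₁ * (n : ℝ) ^ (d - 1) ≤
            Real.log (Nat.card {I : Finset (Fin d → Fin n) // IsSCIdeal (cubeRev d n) I}) ∧
          Real.log (Nat.card {I : Finset (Fin d → Fin n) // IsSCIdeal (cubeRev d n) I}) ≤
            c₂ * (n : ℝ) ^ (d - 1) := by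
  obtain ⟨k, rfl⟩ : ∃ k, d = k + 2 := ⟨d - 2, by omega⟩
  have hlog2 : (0:ℝ) < Real.log 2 := Real.log_pos (by norm_num)
  have hbase : (0:ℝ) < (8*((k:ℝ)+2))^(k+1) := by positivity
  refine ⟨Real.log 2 / (8*((k:ℝ)+2))^(k+1), 2 * Real.log 2, div_pos hlog2 hbase,
    by positivity, ?_⟩
  intro n hneven hn2
  obtain ⟨t, ht⟩ := hneven
  obtain ⟨m, rfl⟩ : ∃ m, n = 2*m := ⟨t, by omega⟩
  have hm : 1 ≤ m := by omega
  have hd1 : (k+2) - 1 = k + 1 := rfl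
  rw [hd1]
  set N := Nat.card {I : Finset (Fin (k+2) → Fin (2*m)) // IsSCIdeal (cubeRev (k+2) (2*m)) I}
    with hN
  have hN2 : 2 ≤ N := two_le_card_sc hm
  have hNpos : (0:ℝ) < (N:ℝ) := by exact_mod_cast lt_of_lt_of_le (by norm_num) hN2
  have hc1eq : Real.log 2 / (8*((k:ℝ)+2))^(k+1) * ((2*m : ℕ) : ℝ)^(k+1)
      = Real.log 2 * (((2*m : ℕ) : ℝ)/(8*((k:ℝ)+2)))^(k+1) := by
    rw [div_pow]
    ring
  constructor
  · -- lower bound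
    rw [hc1eq]
    by_cases hbig : 4*k+8 ≤ m
    · have hE : (2:ℕ)^((m/(2*k+4))^(k+1)) ≤ N := by
        calc (2:ℕ)^((m/(2*k+4))^(k+1)) ≤ 2^((Lplus k m).card) :=
              Nat.pow_le_pow_right (by norm_num) (card_Lplus_ge hbig)
          _ ≤ N := two_pow_card_Lplus_le
      have hlogN : ((m/(2*k+4))^(k+1) : ℕ) * Real.log 2 ≤ Real.log N := by
        have h1 : ((2:ℕ)^((m/(2*k+4))^(k+1)) : ℝ) ≤ (N:ℝ) := by exact_mod_cast hE
        have h2 := Real.log_le_log (by positivity) h1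
        rwa [show ((2:ℕ)^((m/(2*k+4))^(k+1)) : ℝ) = (2:ℝ)^((m/(2*k+4))^(k+1)) by push_cast; ring,
          Real.log_pow] at h2
      refine le_trans ?_ hlogN
      rw [mul_comm]
      apply mul_le_mul_of_nonneg_right _ (le_of_lt hlog2)
      -- ((2m)/(8(k+2)))^(k+1) ≤ (s^(k+1) : ℕ)
      have hms : (2*m : ℕ) ≤ (8*(k+2)) * (m/(2*k+4)) := by
        have h := m_le_smul hbig
        have h8 : (8*(k+2)) * (m/(2*k+4)) = 2*((4*k+8) * (m/(2*k+4))) := by ring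
        omega
      have hdivle : ((2*m : ℕ) : ℝ)/(8*((k:ℝ)+2)) ≤ ((m/(2*k+4) : ℕ) : ℝ) := by
        rw [div_le_iff₀ (by positivity)]
        calc ((2*m : ℕ) : ℝ) ≤ (((8*(k+2)) * (m/(2*k+4)) : ℕ) : ℝ) := by exact_mod_cast hms
          _ = ((m/(2*k+4) : ℕ) : ℝ) * (8*((k:ℝ)+2)) := by push_cast; ring
      calc (((2*m : ℕ) : ℝ)/(8*((k:ℝ)+2)))^(k+1) ≤ ((m/(2*k+4) : ℕ) : ℝ)^(k+1) := by
            apply pow_le_pow_left₀ (by positivity) hdivle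
        _ = (((m/(2*k+4))^(k+1) : ℕ) : ℝ) := by push_cast; ring
    · -- small n
      have hlogN : Real.log 2 ≤ Real.log N :=
        Real.log_le_log (by norm_num) (by exact_mod_cast hN2)
      refine le_trans ?_ hlogN
      have hle1 : (((2*m : ℕ) : ℝ)/(8*((k:ℝ)+2)))^(k+1) ≤ 1 := by
        apply pow_le_one₀ (by positivity)
        rw [div_le_one (by positivity)]
        have hbig' : 2*m ≤ 8*k+16 := by omega
        calc ((2*m : ℕ) : ℝ) ≤ ((8*k+16 : ℕ) : ℝ) := by exact_mod_cast hbig'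
          _ = 8*((k:ℝ)+2) := by push_cast; ring
      calc Real.log 2 * (((2*m : ℕ) : ℝ)/(8*((k:ℝ)+2)))^(k+1) ≤ Real.log 2 * 1 :=
            mul_le_mul_of_nonneg_left hle1 (le_of_lt hlog2)
        _ = Real.log 2 := mul_one _
  · -- upper bound
    have hup : N ≤ 2^(4*m*(2*m)^k) := card_upper
    have h1 : (N:ℝ) ≤ ((2^(4*m*(2*m)^k) : ℕ) : ℝ) := by exact_mod_cast hup
    have h2 := Real.log_le_log hNpos h1
    rw [show ((2^(4*m*(2*m)^k) : ℕ) : ℝ) = (2:ℝ)^(4*m*(2*m)^k) by push_cast; ring,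
      Real.log_pow] at h2
    refine le_trans h2 ?_
    have hnat : (4*m*(2*m)^k : ℕ) = 2 * (2*m)^(k+1) := by ring
    rw [hnat]
    push_cast
    ring_nf
    nlinarith [hlog2, pow_nonneg (by positivity : (0:ℝ) ≤ 2*(m:ℝ)) (k+1)]
end

section
/- Let ℓ₁,…,ℓ_d be a sequence of positive integers and let P = [ℓ₁]×⋯×[ℓ_d]. Then for any two ideals I and J of P, |I ∩ J| · |P| ≥ |I| · |J|; equivalently, the density μ(I ∩ J) = |I ∩ J|/|P| satisfies μ(I ∩ J) ≥ μ(I)·μ(J). -/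
open Finset
open scoped FinsetFamily

/-
Ideals of a product of chains are exactly its lower sets, and a product of chains is a finite
distributive lattice. By the Ahlswede–Daykin four functions theorem (in Daykin's form
`|I| |J| ≤ |I ⊼ J| |I ⊻ J|`), it remains to note that `I ⊼ J ⊆ I ∩ J` for ideals and that
`I ⊻ J` fits in the whole lattice.
-/

theorem IsIdeal.infs_subset_inter {α : Type*} [Lattice α] [DecidableEq α] {I J : Finset α}
    (hI : IsIdeal I) (hJ : IsIdeal J) : I ⊼ J ⊆ I ∩ J :=
  infs_subset_iff.2 fun a ha b hb ↦ mem_inter.2 ⟨hI a ha _ inf_le_left, hJ b hb _ inf_le_right⟩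

theorem IsIdeal.card_mul_card_le_card_inter_mul_card {α : Type*} [DistribLattice α] [Fintype α]
    [DecidableEq α] {I J : Finset α} (hI : IsIdeal I) (hJ : IsIdeal J) :
    #I * #J ≤ #(I ∩ J) * Fintype.card α :=
  calc #I * #J ≤ #(I ⊼ J) * #(I ⊻ J) := le_card_infs_mul_card_sups I J
    _ ≤ #(I ∩ J) * Fintype.card α :=
      Nat.mul_le_mul (card_le_card (hI.infs_subset_inter hJ)) (card_le_univ _)

theorem ideal_correlation_general (d : ℕ) (ℓ : Fin d → ℕ)
    (I J : Finset (∀ i, Fin (ℓ i))) (hI : IsIdeal I) (hJ : IsIdeal J) :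
    I.card * J.card ≤ (I ∩ J).card * Fintype.card (∀ i, Fin (ℓ i)) :=
  hI.card_mul_card_le_card_inter_mul_card hJ

/-- Correlation inequality for ideals of a product of chains:
`|I ∩ J| · |P| ≥ |I| · |J|`. -/
theorem ideal_correlation (d : ℕ) (ℓ : Fin d → ℕ) (hpos : ∀ i, 0 < ℓ i)
    (I J : Finset (∀ i, Fin (ℓ i))) (hI : IsIdeal I) (hJ : IsIdeal J) :
    I.card * J.card ≤ (I ∩ J).card * Fintype.card (∀ i, Fin (ℓ i)) :=
  ideal_correlation_general d ℓ I J hI hJ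
end

section
/- Let ℓ₁,…,ℓ_d be a sequence of positive integers whose product ℓ₁⋯ℓ_d is even. Then for any two self-complementary ideals I and J of [ℓ₁]×⋯×[ℓ_d], one has 4·|I ∩ J| ≥ ℓ₁⋯ℓ_d. -/
open Finset

open FinsetFamily in
/-- If `ℓ₁⋯ℓ_d` is even, any two self-complementary ideals `I`, `J` of
`[ℓ₁] × ⋯ × [ℓ_d]` satisfy `4·|I ∩ J| ≥ ℓ₁⋯ℓ_d`. -/
theorem scIdeal_intersection_lower_bound (d : ℕ) (ℓ : Fin d → ℕ) (hpos : ∀ i, 0 < ℓ i)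
    (heven : Even (∏ i, ℓ i)) (I J : Finset (∀ i, Fin (ℓ i)))
    (hI : IsSCIdeal (chainRev ℓ) I) (hJ : IsSCIdeal (chainRev ℓ) J) :
    ∏ i, ℓ i ≤ 4 * (I ∩ J).card := by
  classical
  have : ∀ i, NeZero (ℓ i) := fun i => ⟨(hpos i).ne'⟩
  have hN : ∏ i, ℓ i = Fintype.card (∀ i, Fin (ℓ i)) := by
    simp [Fintype.card_pi]
  have hinv : Function.Involutive (chainRev ℓ) := by
    intro a; funext i; exact Fin.rev_rev (a i)
  have hinj : Function.Injective (chainRev ℓ) := hinv.injective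
  -- a self-complementary ideal contains exactly half the elements
  have half : ∀ K : Finset (∀ i, Fin (ℓ i)), IsSCIdeal (chainRev ℓ) K →
      2 * K.card = Fintype.card (∀ i, Fin (ℓ i)) := by
    intro K hK
    have hdisj : Disjoint K (K.image (chainRev ℓ)) := by
      rw [Finset.disjoint_left]
      intro a ha hb
      obtain ⟨b, hbK, hba⟩ := Finset.mem_image.1 hb
      have : chainRev ℓ a = b := by rw [← hba, hinv b]
      exact ((hK.2 a).1 ha) (this ▸ hbK)
    have hunion : K ∪ K.image (chainRev ℓ) = Finset.univ := by
      apply Finset.eq_univ_of_forall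
      intro a
      by_cases ha : a ∈ K
      · exact Finset.mem_union_left _ ha
      · refine Finset.mem_union_right _ (Finset.mem_image.2 ⟨chainRev ℓ a, ?_, hinv a⟩)
        by_contra h
        exact ha ((hK.2 a).2 h)
    have := congrArg Finset.card hunion
    rw [Finset.card_union_of_disjoint hdisj, Finset.card_image_of_injective _ hinj,
      Finset.card_univ] at this
    omega
  -- Harris/Kleitman correlation via Daykin's inequality
  have hdaykin := Finset.le_card_infs_mul_card_sups I J
  have hinfs : I ⊼ J ⊆ I ∩ J := by
    intro c hc
    obtain ⟨a, ha, b, hb, hab⟩ := Finset.mem_infs.1 hc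
    refine Finset.mem_inter.2 ⟨hI.1 a ha c ?_, hJ.1 b hb c ?_⟩
    · rw [← hab]; exact inf_le_left
    · rw [← hab]; exact inf_le_right
  have h1 : (I ⊼ J).card ≤ (I ∩ J).card := Finset.card_le_card hinfs
  have h2 : (I ⊻ J).card ≤ Fintype.card (∀ i, Fin (ℓ i)) := Finset.card_le_univ _
  have hIc := half I hI
  have hJc := half J hJ
  have key : I.card * J.card ≤ (I ∩ J).card * Fintype.card (∀ i, Fin (ℓ i)) :=
    hdaykin.trans (Nat.mul_le_mul h1 h2)
  have hNpos : 0 < Fintype.card (∀ i, Fin (ℓ i)) := Fintype.card_pos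
  rw [hN]
  nlinarith [key, hIc, hJc, hNpos]
end

section
/- Let ℓ₁,…,ℓ_d be a sequence of positive integers, all of which are odd except for ℓ_k, which is even. Then for any two self-complementary ideals I and J of [ℓ₁]×⋯×[ℓ_d], one has 4·|I ∩ J| ≥ ℓ₁⋯ℓ_d + ℓ_k. -/
open Finset

/-!
Cut `[ℓ₁] × ⋯ × [ℓ_d]` into the slices `a_k = t`. Reversing every coordinate except the `k`-th
is an involution of each slice whose fixed points exist because the other `ℓᵢ` are odd. On a slice
with `t ≤ ℓ_k + 1 - t`, this involution sends the complement `K` of `I` in the slice into `I`, so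
`2|K| < |slice|`, and likewise for `J`. Both complements are upper sets of the slice, so the
four functions theorem gives `|K||L| ≤ |slice| |K ∩ L|`, and the two bounds combine to
`2|(I ∆ J) ∩ slice| < |slice|`. The opposite slices follow by the symmetry `φ`. Summing over the
`ℓ_k` slices gives `2|I ∆ J| + ℓ_k ≤ ℓ₁⋯ℓ_d`, and `|I| = |J| = ℓ₁⋯ℓ_d / 2` turns this into the
bound on `|I ∩ J|`.
-/

open scoped symmDiff FinsetFamily

lemma Finset.card_symmDiff_add_two_mul_card_inter {α : Type*} [DecidableEq α] (s t : Finset α) :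
    #(s ∆ t) + 2 * #(s ∩ t) = #s + #t := by
  rw [Finset.symmDiff_def, card_union_of_disjoint disjoint_sdiff_sdiff,
    ← card_sdiff_add_card_inter s t, ← card_sdiff_add_card_inter t s, inter_comm t s]
  ring

lemma Finset.two_mul_card_symmDiff_lt {α : Type*} [DecidableEq α] {K L W : Finset α}
    (hK : 2 * #K < #W) (hL : 2 * #L < #W) (hKL : #K * #L ≤ #W * #(K ∩ L)) :
    2 * #(K ∆ L) < #W := by
  have hcard := card_symmDiff_add_two_mul_card_inter K L
  have hprod : (1 : ℤ) ≤ (#W - 2 * #K) * (#W - 2 * #L) :=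
    one_le_mul_of_one_le_of_one_le (by omega) (by omega)
  zify at *
  nlinarith

lemma Finset.two_mul_card_lt_card_of_involutive {α : Type*} [DecidableEq α] {ψ : α → α}
    (hψ : Function.Involutive ψ) {K W : Finset α} {c : α} (hKW : K ⊆ W)
    (hψW : ∀ a ∈ W, ψ a ∈ W) (hcW : c ∈ W) (hc : ψ c = c) (hK : ∀ a ∈ K, ψ a ∉ K) :
    2 * #K < #W := by
  have hdisj : Disjoint K (K.image ψ) := by
    rw [disjoint_right]
    rintro _ hx
    obtain ⟨a, ha, rfl⟩ := mem_image.1 hx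
    exact hK a ha
  have hcK : c ∉ K ∪ K.image ψ := by
    rw [mem_union, mem_image, not_or, not_exists]
    refine ⟨fun h => hK c h (by rwa [hc]), fun a ⟨ha, hac⟩ => hK a ha ?_⟩
    have hac' : a = c := by rw [← hψ a, hac, hc]
    rwa [hac, ← hac']
  have hsub : insert c (K ∪ K.image ψ) ⊆ W := by
    refine insert_subset hcW (union_subset hKW ?_)
    rintro _ hx
    obtain ⟨a, ha, rfl⟩ := mem_image.1 hx
    exact hψW a (hKW ha)
  calc 2 * #K < #(insert c (K ∪ K.image ψ)) := by
        rw [card_insert_of_notMem hcK, card_union_of_disjoint hdisj,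
          card_image_of_injective _ hψ.injective]
        omega
    _ ≤ #W := card_le_card hsub

lemma Finset.two_mul_card_eq_of_involutive {P : Type*} [Fintype P] [DecidableEq P] {φ : P → P}
    (hφ : Function.Involutive φ) {I : Finset P} (hI : ∀ a, a ∈ I ↔ φ a ∉ I) :
    2 * #I = Fintype.card P := by
  have hcompl : #Iᶜ = #I := by
    refine card_nbij' φ φ (fun a ha => ?_) (fun a ha => ?_) (fun a _ => hφ a) (fun a _ => hφ a)
    · rw [coe_compl, Set.mem_compl_iff, mem_coe] at ha
      rwa [mem_coe, hI, hφ]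
    · exact mem_compl.2 ((hI a).1 ha)
  rw [← card_add_card_compl I, hcompl, two_mul]

lemma card_sdiff_mul_card_sdiff_le {α : Type*} [DistribLattice α] [DecidableEq α]
    {W I J : Finset α} (hW : IsSublattice (W : Set α)) (hI : IsIdeal I) (hJ : IsIdeal J) :
    #(W \ I) * #(W \ J) ≤ #W * #((W \ I) ∩ (W \ J)) := by
  have hinfs : (W \ I) ⊼ (W \ J) ⊆ W := by
    intro x hx
    obtain ⟨a, ha, b, hb, rfl⟩ := mem_infs.1 hx
    exact hW.infClosed (sdiff_subset ha) (sdiff_subset hb)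
  have hsups : (W \ I) ⊻ (W \ J) ⊆ (W \ I) ∩ (W \ J) := by
    intro x hx
    obtain ⟨a, ha, b, hb, rfl⟩ := mem_sups.1 hx
    rw [mem_sdiff] at ha hb
    have hab : a ⊔ b ∈ W := hW.supClosed ha.1 hb.1
    exact mem_inter.2 ⟨mem_sdiff.2 ⟨hab, fun h => ha.2 (hI _ h a le_sup_left)⟩,
      mem_sdiff.2 ⟨hab, fun h => hb.2 (hJ _ h b le_sup_right)⟩⟩
  exact (le_card_infs_mul_card_sups _ _).trans
    (Nat.mul_le_mul (card_le_card hinfs) (card_le_card hsups))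

lemma Fin.exists_rev_eq_self_of_odd {n : ℕ} (hn : Odd n) : ∃ x : Fin n, x.rev = x := by
  obtain ⟨m, rfl⟩ := hn
  exact ⟨⟨m, by omega⟩, Fin.ext (by simp only [Fin.val_rev]; omega)⟩

section ProductOfChains

variable {d : ℕ} {ℓ : Fin d → ℕ}

lemma chainRev_involutive : Function.Involutive (chainRev ℓ) :=
  fun a => funext fun i => Fin.rev_rev (a i)

lemma IsSCIdeal.chainRev_mem_of_notMem {I : Finset (∀ i, Fin (ℓ i))}
    (hI : IsSCIdeal (chainRev ℓ) I) {a : ∀ i, Fin (ℓ i)} (ha : a ∉ I) : chainRev ℓ a ∈ I :=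
  not_not.1 (mt (hI.2 a).2 ha)

lemma chainRev_mem_symmDiff_iff {I J : Finset (∀ i, Fin (ℓ i))} (hI : IsSCIdeal (chainRev ℓ) I)
    (hJ : IsSCIdeal (chainRev ℓ) J) (a : ∀ i, Fin (ℓ i)) :
    chainRev ℓ a ∈ I ∆ J ↔ a ∈ I ∆ J := by
  simp only [mem_symmDiff, hI.2 a, hJ.2 a]
  tauto

lemma card_filter_apply_eq_rev {s : Finset (∀ i, Fin (ℓ i))}
    (hs : ∀ a, chainRev ℓ a ∈ s ↔ a ∈ s) (k : Fin d) (t : Fin (ℓ k)) :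
    #{a ∈ s | a k = t.rev} = #{a ∈ s | a k = t} := by
  refine card_nbij' (chainRev ℓ) (chainRev ℓ) (fun a ha => ?_) (fun a ha => ?_)
    (fun a _ => chainRev_involutive a) (fun a _ => chainRev_involutive a)
  all_goals
    rw [coe_filter] at ha ⊢
    exact ⟨(hs a).2 ha.1, by simp [chainRev, ha.2]⟩

variable (ℓ) in
def coordSlice (k : Fin d) (t : Fin (ℓ k)) : Finset (∀ i, Fin (ℓ i)) :=
  {a | a k = t}

@[simp]
lemma mem_coordSlice {k : Fin d} {t : Fin (ℓ k)} {a : ∀ i, Fin (ℓ i)} :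
    a ∈ coordSlice ℓ k t ↔ a k = t := by
  simp [coordSlice]

lemma isSublattice_coordSlice (k : Fin d) (t : Fin (ℓ k)) :
    IsSublattice (↑(coordSlice ℓ k t) : Set (∀ i, Fin (ℓ i))) := by
  constructor <;>
  · intro a ha b hb
    simp only [mem_coe, mem_coordSlice] at ha hb ⊢
    simp [ha, hb]

lemma card_coordSlice_rev (k : Fin d) (t : Fin (ℓ k)) :
    #(coordSlice ℓ k t.rev) = #(coordSlice ℓ k t) :=
  card_filter_apply_eq_rev (s := univ) (fun _ => by simp only [mem_univ]) k t

variable (ℓ) in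
def chainRevExcept (k : Fin d) (a : ∀ i, Fin (ℓ i)) : ∀ i, Fin (ℓ i) :=
  Function.update (chainRev ℓ a) k (a k)

@[simp]
lemma chainRevExcept_apply_self (k : Fin d) (a : ∀ i, Fin (ℓ i)) :
    chainRevExcept ℓ k a k = a k :=
  Function.update_self _ _ _

lemma chainRevExcept_involutive (k : Fin d) : Function.Involutive (chainRevExcept ℓ k) := by
  intro a
  funext i
  rcases eq_or_ne i k with rfl | hi
  · simp
  · simp [chainRevExcept, chainRev, Function.update_of_ne hi]

lemma chainRevExcept_le_chainRev {k : Fin d} {a : ∀ i, Fin (ℓ i)} (ha : a k ≤ (a k).rev) :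
    chainRevExcept ℓ k a ≤ chainRev ℓ a := by
  intro i
  rcases eq_or_ne i k with rfl | hi
  · simpa [chainRev] using ha
  · simp [chainRevExcept, Function.update_of_ne hi]

lemma exists_chainRevExcept_eq_self {k : Fin d} (hodd : ∀ i, i ≠ k → Odd (ℓ i))
    (t : Fin (ℓ k)) :
    ∃ c : ∀ i, Fin (ℓ i), c k = t ∧ chainRevExcept ℓ k c = c := by
  have hfix (i : Fin d) : ∃ x : Fin (ℓ i), i ≠ k → x.rev = x := by
    rcases eq_or_ne i k with rfl | hi
    · exact ⟨t, fun h => (h rfl).elim⟩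
    · obtain ⟨x, hx⟩ := Fin.exists_rev_eq_self_of_odd (hodd i hi)
      exact ⟨x, fun _ => hx⟩
  choose m hm using hfix
  refine ⟨Function.update m k t, Function.update_self _ _ _, funext fun i => ?_⟩
  rcases eq_or_ne i k with rfl | hi
  · simp
  · simp [chainRevExcept, chainRev, Function.update_of_ne hi, hm i hi]

variable {k : Fin d} (hodd : ∀ i, i ≠ k → Odd (ℓ i)) {I J : Finset (∀ i, Fin (ℓ i))}
include hodd

lemma two_mul_card_coordSlice_sdiff_lt (hI : IsSCIdeal (chainRev ℓ) I) {t : Fin (ℓ k)}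
    (ht : t ≤ t.rev) : 2 * #(coordSlice ℓ k t \ I) < #(coordSlice ℓ k t) := by
  obtain ⟨c, hck, hc⟩ := exists_chainRevExcept_eq_self hodd t
  refine two_mul_card_lt_card_of_involutive (chainRevExcept_involutive k) sdiff_subset
    (fun a ha => ?_) (by simpa using hck) hc (fun a ha => ?_)
  · simpa using ha
  · rw [mem_sdiff, mem_coordSlice] at ha
    have hrev : chainRevExcept ℓ k a ≤ chainRev ℓ a :=
      chainRevExcept_le_chainRev (by rw [ha.1]; exact ht)
    exact fun h => (mem_sdiff.1 h).2 (hI.1 _ (hI.chainRev_mem_of_notMem ha.2) _ hrev)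

variable (hI : IsSCIdeal (chainRev ℓ) I) (hJ : IsSCIdeal (chainRev ℓ) J)
include hI hJ

lemma two_mul_card_filter_symmDiff_lt_of_le_rev {t : Fin (ℓ k)} (ht : t ≤ t.rev) :
    2 * #{a ∈ I ∆ J | a k = t} < #(coordSlice ℓ k t) := by
  have hslice : {a ∈ I ∆ J | a k = t} = (coordSlice ℓ k t \ I) ∆ (coordSlice ℓ k t \ J) := by
    ext a
    simp only [mem_filter, mem_symmDiff, mem_sdiff, mem_coordSlice]
    tauto
  rw [hslice]
  exact two_mul_card_symmDiff_lt (two_mul_card_coordSlice_sdiff_lt hodd hI ht)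
    (two_mul_card_coordSlice_sdiff_lt hodd hJ ht)
    (card_sdiff_mul_card_sdiff_le (isSublattice_coordSlice k t) hI.1 hJ.1)

lemma two_mul_card_filter_symmDiff_lt (t : Fin (ℓ k)) :
    2 * #{a ∈ I ∆ J | a k = t} < #(coordSlice ℓ k t) := by
  rcases le_total t t.rev with ht | ht
  · exact two_mul_card_filter_symmDiff_lt_of_le_rev hodd hI hJ ht
  · have h := two_mul_card_filter_symmDiff_lt_of_le_rev hodd hI hJ (t := t.rev)
      (by rwa [Fin.rev_rev])
    rwa [card_filter_apply_eq_rev (chainRev_mem_symmDiff_iff hI hJ), card_coordSlice_rev] at h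

lemma two_mul_card_symmDiff_add_le :
    2 * #(I ∆ J) + ℓ k ≤ ∏ i, ℓ i := by
  calc 2 * #(I ∆ J) + ℓ k = ∑ t : Fin (ℓ k), (2 * #{a ∈ I ∆ J | a k = t} + 1) := by
        rw [sum_add_distrib, ← mul_sum, ← card_eq_sum_card_fiberwise fun _ _ => mem_univ _]
        simp
    _ ≤ ∑ t : Fin (ℓ k), #(coordSlice ℓ k t) :=
        sum_le_sum fun t _ => two_mul_card_filter_symmDiff_lt hodd hI hJ t
    _ = ∏ i, ℓ i := by
        simp only [coordSlice]
        rw [← card_eq_sum_card_fiberwise fun _ _ => mem_univ _, card_univ]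
        simp

end ProductOfChains

theorem scIdeal_intersection_lower_bound_one_even_general (d : ℕ) (ℓ : Fin d → ℕ)
    (k : Fin d) (hodd : ∀ i, i ≠ k → Odd (ℓ i))
    (I J : Finset (∀ i, Fin (ℓ i)))
    (hI : IsSCIdeal (chainRev ℓ) I) (hJ : IsSCIdeal (chainRev ℓ) J) :
    (∏ i, ℓ i) + ℓ k ≤ 4 * (I ∩ J).card := by
  have hsymm := two_mul_card_symmDiff_add_le hodd hI hJ
  have hcardI := two_mul_card_eq_of_involutive chainRev_involutive hI.2
  have hcardJ := two_mul_card_eq_of_involutive chainRev_involutive hJ.2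
  have hcard := card_symmDiff_add_two_mul_card_inter I J
  simp only [Fintype.card_pi, Fintype.card_fin] at hcardI hcardJ
  omega

/-- If all `ℓᵢ` are odd except `ℓ_k` which is even, any two self-complementary ideals
`I`, `J` of `[ℓ₁] × ⋯ × [ℓ_d]` satisfy `4·|I ∩ J| ≥ ℓ₁⋯ℓ_d + ℓ_k`. -/
theorem scIdeal_intersection_lower_bound_one_even (d : ℕ) (ℓ : Fin d → ℕ)
    (hpos : ∀ i, 0 < ℓ i) (k : Fin d) (hk : Even (ℓ k)) (hodd : ∀ i, i ≠ k → Odd (ℓ i))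
    (I J : Finset (∀ i, Fin (ℓ i)))
    (hI : IsSCIdeal (chainRev ℓ) I) (hJ : IsSCIdeal (chainRev ℓ) J) :
    (∏ i, ℓ i) + ℓ k ≤ 4 * (I ∩ J).card :=
  scIdeal_intersection_lower_bound_one_even_general d ℓ k hodd I J hI hJ
end

section
/- Let H be the following set of ten 3-element subsets of {1,2,3,4,5,6}: {1,2,3}, {1,2,4}, {1,3,6}, {1,4,5}, {1,5,6}, {2,3,5}, {2,4,6}, {2,5,6}, {3,4,6}, {3,4,5}, and let D = H ∪ {A ⊆ {1,…,6} : |A| = 2}. Then every family F ⊆ D in which any two members share a common element satisfies |F| ≤ 10. -/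
/-!
A triple of `H` that is disjoint from some pair in `F` cannot itself be in `F`. So it suffices that
for every intersecting family `Q` of pairs at least `|Q|` triples of `H` are disjoint from a member
of `Q`, a Hall-type condition. An intersecting family of pairs is a star or a triangle, and for
these the condition is a finite check. It holds because `H` is the `2-(6,3,2)` design: the five
triples of `H` missing a point `v` correspond to the edges of a `5`-cycle on the other points, and
the pair `{v, x}` misses exactly the two at `x`, so a star with leaves `S` misses at least `|S|`.
-/

open Finset

section

variable {α : Type*} [DecidableEq α]

theorem exists_eq_pair_of_card_eq_two {P : Finset α} {v : α} (hP : #P = 2) (hv : v ∈ P) :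
    ∃ x ≠ v, P = {v, x} := by
  obtain ⟨x, y, hxy, rfl⟩ := card_eq_two.1 hP
  rcases mem_insert.1 hv with rfl | hv
  · exact ⟨y, hxy.symm, rfl⟩
  · rw [mem_singleton.1 hv]
    exact ⟨x, hxy, pair_comm x y⟩

theorem eq_pair_of_card_eq_two {P : Finset α} {u w : α} (hP : #P = 2) (hu : u ∈ P) (hw : w ∈ P)
    (huw : u ≠ w) : P = {u, w} :=
  (eq_of_subset_of_card_le (insert_subset hu (singleton_subset_iff.2 hw))
    (by rw [hP, card_pair huw])).symm

theorem not_disjoint_pair_iff {P : Finset α} {u w : α} :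
    ¬Disjoint P {u, w} ↔ u ∈ P ∨ w ∈ P := by
  rw [disjoint_insert_right, disjoint_singleton_right]
  tauto

theorem eq_star_or_eq_triangle_of_intersecting {Q : Finset (Finset α)} (hQ : ∀ P ∈ Q, #P = 2)
    (hint : (Q : Set (Finset α)).Intersecting) (hne : Q.Nonempty) :
    (∃ v, ∀ P ∈ Q, v ∈ P) ∨ ∃ a b c, Q = {{a, b}, {b, c}, {a, c}} := by
  obtain ⟨P₀, hP₀⟩ := hne
  obtain ⟨a, b, hab, rfl⟩ := card_eq_two.1 (hQ _ hP₀)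
  by_cases ha : ∀ P ∈ Q, a ∈ P
  · exact Or.inl ⟨a, ha⟩
  by_cases hb : ∀ P ∈ Q, b ∈ P
  · exact Or.inl ⟨b, hb⟩
  push Not at ha hb
  obtain ⟨P₁, hP₁, haP₁⟩ := ha
  obtain ⟨P₂, hP₂, hbP₂⟩ := hb
  obtain ⟨c, hcb, rfl⟩ := exists_eq_pair_of_card_eq_two (hQ _ hP₁)
    ((not_disjoint_pair_iff.1 (hint hP₁ hP₀)).resolve_left haP₁)
  have hac : a ≠ c := by rintro rfl; simp at haP₁
  have haP₂ := (not_disjoint_pair_iff.1 (hint hP₂ hP₀)).resolve_right hbP₂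
  have hcP₂ := (not_disjoint_pair_iff.1 (hint hP₂ hP₁)).resolve_left hbP₂
  rw [eq_pair_of_card_eq_two (hQ _ hP₂) haP₂ hcP₂ hac] at hP₂
  refine Or.inr ⟨a, b, c, ext fun P => ⟨fun hP => ?_, ?_⟩⟩
  · simp only [mem_insert, mem_singleton]
    by_cases haP : a ∈ P
    · obtain ⟨x, -, rfl⟩ := exists_eq_pair_of_card_eq_two (hQ _ hP) haP
      have hx : x = b ∨ x = c := by
        simpa [hab, hac] using not_disjoint_iff.1 (hint hP hP₁)
      rcases hx with rfl | rfl <;> simp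
    · have hbP := (not_disjoint_pair_iff.1 (hint hP hP₀)).resolve_left haP
      have hcP := (not_disjoint_pair_iff.1 (hint hP hP₂)).resolve_left haP
      exact Or.inr (Or.inl (eq_pair_of_card_eq_two (hQ _ hP) hbP hcP hcb.symm))
  · simp only [mem_insert, mem_singleton]
    rintro (rfl | rfl | rfl) <;> assumption

def avoiders (H Q : Finset (Finset α)) : Finset (Finset α) :=
  H.filter fun T => ∃ P ∈ Q, Disjoint T P

theorem card_le_of_intersecting_of_card_sdiff_le_card_avoiders {F H : Finset (Finset α)}
    (hF : (F : Set (Finset α)).Intersecting) (hall : #(F \ H) ≤ #(avoiders H (F \ H))) :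
    #F ≤ #H := by
  have hdisj : Disjoint (F ∩ H) (avoiders H (F \ H)) := by
    refine disjoint_left.2 fun T hT hTa => ?_
    obtain ⟨P, hP, hTP⟩ := (mem_filter.1 hTa).2
    exact hF (mem_of_mem_inter_left hT) (mem_sdiff.1 hP).1 hTP
  calc #F = #(F ∩ H) + #(F \ H) := (card_inter_add_card_sdiff F H).symm
    _ ≤ #(F ∩ H) + #(avoiders H (F \ H)) := by gcongr
    _ = #(F ∩ H ∪ avoiders H (F \ H)) := (card_union_of_disjoint hdisj).symm
    _ ≤ #H := card_le_card (union_subset inter_subset_right (filter_subset _ _))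

end

def tenTriples : Finset (Finset (Fin 6)) :=
  {{0, 1, 2}, {0, 1, 3}, {0, 2, 5}, {0, 3, 4}, {0, 4, 5},
   {1, 2, 4}, {1, 3, 5}, {1, 4, 5}, {2, 3, 5}, {2, 3, 4}}

theorem card_le_card_avoiders_of_subset_star :
    ∀ v : Fin 6, ∀ Q ⊆ (univ.erase v).image fun x => ({v, x} : Finset (Fin 6)),
      #Q ≤ #(avoiders tenTriples Q) := by
  decide

theorem card_triangle_le_card_avoiders : ∀ a b c : Fin 6,
    #({{a, b}, {b, c}, {a, c}} : Finset (Finset (Fin 6))) ≤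
      #(avoiders tenTriples {{a, b}, {b, c}, {a, c}}) := by
  decide

theorem card_le_card_avoiders_of_intersecting {Q : Finset (Finset (Fin 6))}
    (hQ : ∀ P ∈ Q, #P = 2) (hint : (Q : Set (Finset (Fin 6))).Intersecting) :
    #Q ≤ #(avoiders tenTriples Q) := by
  rcases Q.eq_empty_or_nonempty with rfl | hne
  · simp
  rcases eq_star_or_eq_triangle_of_intersecting hQ hint hne with ⟨v, hv⟩ | ⟨a, b, c, rfl⟩
  · refine card_le_card_avoiders_of_subset_star v Q fun P hP => ?_
    obtain ⟨x, hxv, rfl⟩ := exists_eq_pair_of_card_eq_two (hQ P hP) (hv P hP)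
    exact mem_image_of_mem _ (mem_erase.2 ⟨hxv, mem_univ x⟩)
  · exact card_triangle_le_card_avoiders a b c

/-- Let `H` be the given ten 3-element subsets of `{1,…,6}` (represented here as
`{0,…,5}` via `i ↦ i - 1`) and `D = H ∪ {A : |A| = 2}`. Then every intersecting
family `F ⊆ D` has at most 10 members. -/
theorem intersecting_family_le_ten
    (F : Finset (Finset (Fin 6)))
    (hFD : F ⊆ ({{0, 1, 2}, {0, 1, 3}, {0, 2, 5}, {0, 3, 4}, {0, 4, 5},
        {1, 2, 4}, {1, 3, 5}, {1, 4, 5}, {2, 3, 5}, {2, 3, 4}} : Finset (Finset (Fin 6))) ∪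
      Finset.univ.filter (fun A : Finset (Fin 6) => A.card = 2))
    (hint : ∀ A ∈ F, ∀ B ∈ F, (A ∩ B).Nonempty) :
    F.card ≤ 10 := by
  have hF : (F : Set (Finset (Fin 6))).Intersecting := fun A hA B hB =>
    not_disjoint_iff_nonempty_inter.2 (hint A hA B hB)
  have hpairs : ∀ P ∈ F \ tenTriples, #P = 2 := fun P hP =>
    (mem_filter.1 ((mem_union.1 (hFD (mem_sdiff.1 hP).1)).resolve_left (mem_sdiff.1 hP).2)).2
  exact card_le_of_intersecting_of_card_sdiff_le_card_avoiders hF <|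
    card_le_card_avoiders_of_intersecting hpairs (hF.mono (coe_subset.2 sdiff_subset))
end

section
/- Let r ≥ 2 be an integer and let k be a nonnegative integer with k ≤ r−2. Let C = {(a₁,a₂) ∈ [r−k−1]×[r+k] : a₁ + a₂ ≤ r}. Then for every ideal I of [r−k−1]×[r+k] (not necessarily self-complementary), the symmetric difference satisfies |C Δ I| ≤ (r+k)(r−k−1)/2; moreover, equality holds if and only if I is the empty ideal or I is the entire poset [r−k−1]×[r+k]. -/
open Finset

/-- The self-complementary "staircase" ideal `{(a₁,a₂) ∈ [r-k-1] × [r+k] : a₁ + a₂ ≤ r}`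
(in 0-indexed coordinates, `a₁ + a₂ ≤ r` becomes `a₁ + a₂ + 2 ≤ r`). -/
def triangleIdeal (r k : ℕ) : Finset (Fin (r - k - 1) × Fin (r + k)) :=
  Finset.univ.filter (fun p => (p.1 : ℕ) + (p.2 : ℕ) + 2 ≤ r)

/-!
Write `C` for the staircase. Since `|C Δ I| = |C| - |I ∩ C| + |I \ C|`, it suffices to show
`|I \ C| ≤ |I ∩ C|` for every ideal `I`. This follows from an injection `ψ` of the complement
of `C` into `C` that moves every point down: it maps `I \ C` into `I ∩ C`. On row `a`, where
`C` has `d = r - 1 - a` cells, `ψ` shifts the cells outside `C` left by `d`; those that still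
miss `C` are sent to the mirror row `rev a`, whose staircase is exactly long enough to take
them. The central symmetry of the grid swaps `C` with its complement, so `2|C| = |grid|`.
Equality forces `ψ` to map `I \ C` onto `I ∩ C`; for a nonempty proper ideal, one of the
cells `(1, 1)` or `(1, r - 1)` of `I ∩ C` is missed.
-/

section DownwardInjection

variable {P : Type*} [DecidableEq P]

theorem card_sdiff_union_sdiff_add_card_inter (C I : Finset P) :
    #((C \ I) ∪ (I \ C)) + #(I ∩ C) = #C + #(I \ C) := by
  rw [card_union_of_disjoint disjoint_sdiff_sdiff, inter_comm, ← card_sdiff_add_card_inter C I]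
  omega

variable [PartialOrder P]

structure IsDownwardInjection (C : Finset P) (ψ : P → P) : Prop where
  mapsTo : ∀ p ∉ C, ψ p ∈ C
  le : ∀ p ∉ C, ψ p ≤ p
  injOn : Set.InjOn ψ {p | p ∉ C}

namespace IsDownwardInjection

variable {C I : Finset P} {ψ : P → P}

theorem mapsTo_sdiff (hψ : IsDownwardInjection C ψ) (hI : IsIdeal I) :
    Set.MapsTo ψ ↑(I \ C) ↑(I ∩ C) := by
  intro p hp
  simp only [coe_sdiff, coe_inter, Set.mem_sdiff, Set.mem_inter_iff, mem_coe] at hp ⊢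
  exact ⟨hI p hp.1 _ (hψ.le p hp.2), hψ.mapsTo p hp.2⟩

theorem injOn_sdiff (hψ : IsDownwardInjection C ψ) : Set.InjOn ψ ↑(I \ C) :=
  hψ.injOn.mono fun _ hp => (mem_sdiff.1 hp).2

theorem card_sdiff_le (hψ : IsDownwardInjection C ψ) (hI : IsIdeal I) :
    #(I \ C) ≤ #(I ∩ C) :=
  card_le_card_of_injOn ψ (hψ.mapsTo_sdiff hI) hψ.injOn_sdiff

theorem card_sdiff_lt (hψ : IsDownwardInjection C ψ) (hI : IsIdeal I) {c : P}
    (hc : c ∈ I ∩ C) (hmiss : ∀ p ∈ I \ C, ψ p ≠ c) : #(I \ C) < #(I ∩ C) := by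
  rw [← card_image_of_injOn hψ.injOn_sdiff]
  refine card_lt_card ((ssubset_iff_of_subset ?_).2 ⟨c, hc, ?_⟩)
  · exact image_subset_iff.2 (hψ.mapsTo_sdiff hI)
  · simpa only [mem_image, not_exists, not_and] using hmiss

end IsDownwardInjection

end DownwardInjection

section Staircase

variable {r k : ℕ}

@[simp]
theorem mem_triangleIdeal {p : Fin (r - k - 1) × Fin (r + k)} :
    p ∈ triangleIdeal r k ↔ (p.1 : ℕ) + p.2 + 2 ≤ r := by
  simp [triangleIdeal]

theorem card_compl_triangleIdeal : #(triangleIdeal r k)ᶜ = #(triangleIdeal r k) := by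
  refine (card_equiv (Equiv.prodCongr Fin.revPerm Fin.revPerm) fun p => ?_).symm
  have := p.1.isLt
  have := p.2.isLt
  simp only [mem_compl, mem_triangleIdeal, Equiv.prodCongr_apply, Prod.map_fst, Prod.map_snd,
    Fin.revPerm_apply, Fin.val_rev]
  omega

theorem two_mul_card_triangleIdeal : 2 * #(triangleIdeal r k) = (r + k) * (r - k - 1) := by
  have := card_add_card_compl (triangleIdeal r k)
  rw [card_compl_triangleIdeal, Fintype.card_prod, Fintype.card_fin, Fintype.card_fin] at this
  rw [mul_comm (r + k)]
  omega

def triangleShift (r k : ℕ) (p : Fin (r - k - 1) × Fin (r + k)) :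
    Fin (r - k - 1) × Fin (r + k) :=
  (if (p.2 : ℕ) < 2 * (r - 1 - p.1) then p.1 else p.1.rev,
    ⟨p.2 - (r - 1 - p.1), (Nat.sub_le _ _).trans_lt p.2.isLt⟩)

theorem triangleShift_fst (p : Fin (r - k - 1) × Fin (r + k)) :
    ((triangleShift r k p).1 : ℕ) =
      if (p.2 : ℕ) < 2 * (r - 1 - p.1) then (p.1 : ℕ) else r - k - 2 - p.1 := by
  unfold triangleShift
  split_ifs
  · rfl
  · simp only [Fin.val_rev]
    omega

theorem triangleShift_snd (p : Fin (r - k - 1) × Fin (r + k)) :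
    ((triangleShift r k p).2 : ℕ) = p.2 - (r - 1 - p.1) :=
  rfl

theorem isDownwardInjection_triangleShift :
    IsDownwardInjection (triangleIdeal r k) (triangleShift r k) where
  mapsTo p hp := by
    have := p.1.isLt
    have := p.2.isLt
    simp only [mem_triangleIdeal, triangleShift_fst, triangleShift_snd] at hp ⊢
    split_ifs <;> omega
  le p hp := by
    have := p.1.isLt
    simp only [mem_triangleIdeal, Prod.le_def, Fin.le_def, triangleShift_fst,
      triangleShift_snd] at hp ⊢
    split_ifs <;> omega
  injOn p hp q hq h := by
    have := p.1.isLt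
    have := p.2.isLt
    have := q.1.isLt
    have := q.2.isLt
    simp only [Set.mem_ofPred_eq, mem_triangleIdeal, Prod.ext_iff, Fin.ext_iff, triangleShift_fst,
      triangleShift_snd] at hp hq h ⊢
    split_ifs at h <;> omega

theorem card_sdiff_lt_card_inter_triangleIdeal {I : Finset (Fin (r - k - 1) × Fin (r + k))}
    (hI : IsIdeal I) (hne : I.Nonempty) (hI_ne : I ≠ univ) :
    #(I \ triangleIdeal r k) < #(I ∩ triangleIdeal r k) := by
  obtain ⟨q, hq⟩ := hne
  have := q.1.isLt
  have hψ := isDownwardInjection_triangleShift (r := r) (k := k)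
  let origin : Fin (r - k - 1) × Fin (r + k) := (⟨0, by omega⟩, ⟨0, by omega⟩)
  let lastIn : Fin (r - k - 1) × Fin (r + k) := (⟨0, by omega⟩, ⟨r - 2, by omega⟩)
  let firstOut : Fin (r - k - 1) × Fin (r + k) := (⟨0, by omega⟩, ⟨r - 1, by omega⟩)
  let top : Fin (r - k - 1) × Fin (r + k) := (⟨r - k - 2, by omega⟩, ⟨r + k - 1, by omega⟩)
  have shift_firstOut : triangleShift r k firstOut = origin := by
    ext <;> simp [origin, firstOut, triangleShift_fst, triangleShift_snd]
    omega
  have shift_top : triangleShift r k top = lastIn := by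
    ext <;> simp [lastIn, top, triangleShift_fst, triangleShift_snd] <;> omega
  by_cases hfirstOut : firstOut ∈ I
  · have hlastIn : lastIn ∈ I ∩ triangleIdeal r k :=
      mem_inter.2 ⟨hI _ hfirstOut _ (by simp [lastIn, firstOut, Prod.le_def]; omega),
        by simp [lastIn]; omega⟩
    refine hψ.card_sdiff_lt hI hlastIn fun p hp hplastIn => hI_ne ?_
    obtain ⟨hpI, hpC⟩ := mem_sdiff.1 hp
    obtain rfl : p = top :=
      hψ.injOn hpC (by simp [top]; omega) (hplastIn.trans shift_top.symm)
    refine eq_univ_of_forall fun x => hI _ hpI x ?_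
    have := x.1.isLt
    have := x.2.isLt
    simp only [top, Prod.le_def, Fin.le_def]
    omega
  · have horigin : origin ∈ I ∩ triangleIdeal r k :=
      mem_inter.2 ⟨hI q hq _ (by simp [origin, Prod.le_def, Fin.le_def]),
        by simp [origin]; omega⟩
    refine hψ.card_sdiff_lt hI horigin fun p hp hporigin => hfirstOut ?_
    obtain ⟨hpI, hpC⟩ := mem_sdiff.1 hp
    obtain rfl : p = firstOut :=
      hψ.injOn hpC (by simp [firstOut]; omega) (hporigin.trans shift_firstOut.symm)
    exact hpI

end Staircase

theorem triangleIdeal_symmDiff_bound_general (r k : ℕ)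
    (I : Finset (Fin (r - k - 1) × Fin (r + k))) (hI : IsIdeal I) :
    2 * ((triangleIdeal r k \ I) ∪ (I \ triangleIdeal r k)).card ≤ (r + k) * (r - k - 1) ∧
    (2 * ((triangleIdeal r k \ I) ∪ (I \ triangleIdeal r k)).card = (r + k) * (r - k - 1) ↔
      I = ∅ ∨ I = Finset.univ) := by
  have hΔ := card_sdiff_union_sdiff_add_card_inter (triangleIdeal r k) I
  have hC := two_mul_card_triangleIdeal (r := r) (k := k)
  have hle := isDownwardInjection_triangleShift.card_sdiff_le hI
  refine ⟨by omega, fun heq => ?_, fun h => ?_⟩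
  · by_contra! h
    have := card_sdiff_lt_card_inter_triangleIdeal hI h.1 h.2
    omega
  · have : #(I \ triangleIdeal r k) = #(I ∩ triangleIdeal r k) := by
      rcases h with rfl | rfl <;> simp [← compl_eq_univ_sdiff, card_compl_triangleIdeal]
    omega

/-- For `2 ≤ r` and `k ≤ r - 2`, every ideal `I` of `[r-k-1] × [r+k]` satisfies
`|C Δ I| ≤ (r+k)(r-k-1)/2` where `C` is the staircase ideal, with equality iff `I` is
empty or the entire poset. -/
theorem triangleIdeal_symmDiff_bound (r k : ℕ) (hr : 2 ≤ r) (hk : k ≤ r - 2)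
    (I : Finset (Fin (r - k - 1) × Fin (r + k))) (hI : IsIdeal I) :
    2 * ((triangleIdeal r k \ I) ∪ (I \ triangleIdeal r k)).card ≤ (r + k) * (r - k - 1) ∧
    (2 * ((triangleIdeal r k \ I) ∪ (I \ triangleIdeal r k)).card = (r + k) * (r - k - 1) ↔
      I = ∅ ∨ I = Finset.univ) :=
  triangleIdeal_symmDiff_bound_general r k I hI
end

section
/- Let r be a positive integer. For any two totally symmetric self-complementary ideals I and J of [2r]×[2r]×[2r], one has |I \ J| ≤ (r−1)r(2r−1)/2, and there exists a pair of totally symmetric self-complementary ideals attaining equality. Equivalently, since the distance between two TSSC ideals in the flip graph equals |I \ J|/3, the diameter of the flip graph on totally symmetric self-complementary ideals of [2r]³ equals (r−1)r(2r−1)/6. -/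
open Finset

/-- The poset `[2r] × [2r] × [2r]`. -/
abbrev Box (r : ℕ) := Fin (2 * r) × Fin (2 * r) × Fin (2 * r)

/-- The order-reversing involution `(a₁,a₂,a₃) ↦ (2r+1-a₁, 2r+1-a₂, 2r+1-a₃)`. -/
def boxRev (r : ℕ) (p : Box r) : Box r := (p.1.rev, p.2.1.rev, p.2.2.rev)

/-- A totally symmetric self-complementary (TSSC) ideal of `[2r]³`. -/
def IsTSSC (r : ℕ) (I : Finset (Box r)) : Prop :=
  IsSCIdeal (boxRev r) I ∧
    ∀ a b c : Fin (2 * r), (a, b, c) ∈ I →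
      (a, c, b) ∈ I ∧ (b, a, c) ∈ I ∧ (b, c, a) ∈ I ∧ (c, a, b) ∈ I ∧ (c, b, a) ∈ I

/-!
Work with 0-indexed coordinates, so that `φ` acts by `a ↦ 2r - (a + 1)`. Every TSSC ideal `I`
contains the points with a coordinate `< r` whose other two coordinates sum to `< 2r`: for
such a `p ∉ I` we would get `φ p ∈ I`, hence the permutation of `φ p` lying above `p` is in `I`.
Two TSSC ideals `I`, `J` therefore differ only at the points left free by this and by its
reflection, and since `φ` maps `I \ J` injectively into `J \ I`, `2 |I \ J|` is at most the
number of free points. Half of them have two coordinates `≥ r`; counting these by their small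
coordinate gives `3 ∑_{k<r} k²`. The bound is attained by the ideal of points with two
coordinates `< r` and by the ideal that trades its free points for their reflections.
-/

theorem IsSCIdeal.mem_of_le {P : Type*} [PartialOrder P] {φ ψ : P → P} {I : Finset P}
    (hI : IsSCIdeal φ I) (hψ : ∀ q ∈ I, ψ q ∈ I) {p : P} (hp : p ≤ ψ (φ p)) : p ∈ I := by
  by_contra hpI
  exact hpI (hI.1 _ (hψ _ (not_not.1 (mt (hI.2 p).2 hpI))) p hp)

theorem card_sdiff_le_card_sdiff {α : Type*} [DecidableEq α] {φ : α → α}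
    (hφ : Function.Injective φ) {I J : Finset α} (hI : ∀ a, a ∈ I ↔ φ a ∉ I)
    (hJ : ∀ a, a ∈ J ↔ φ a ∉ J) : #(I \ J) ≤ #(J \ I) := by
  refine card_le_card_of_injOn φ (fun p hp => ?_) hφ.injOn
  simp only [coe_sdiff, Set.mem_sdiff, mem_coe] at hp ⊢
  exact ⟨not_not.1 fun h => hp.2 ((hJ p).2 h), (hI p).1 hp.1⟩

theorem two_mul_card_sdiff_le {α : Type*} [DecidableEq α] {φ : α → α}
    (hφ : Function.Injective φ) {I J S : Finset α} (hI : ∀ a, a ∈ I ↔ φ a ∉ I)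
    (hJ : ∀ a, a ∈ J ↔ φ a ∉ J) (hIJ : I \ J ⊆ S) (hJI : J \ I ⊆ S) :
    2 * #(I \ J) ≤ #S :=
  calc 2 * #(I \ J) ≤ #(I \ J) + #(J \ I) := by
        linarith [card_sdiff_le_card_sdiff hφ hI hJ]
    _ = #(I \ J ∪ J \ I) := (card_union_of_disjoint disjoint_sdiff_sdiff).symm
    _ ≤ #S := card_le_card (union_subset hIJ hJI)

theorem six_mul_sum_range_sq (n : ℕ) :
    6 * ∑ k ∈ range (n + 1), k ^ 2 = n * (n + 1) * (2 * n + 1) := by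
  induction n with
  | zero => simp
  | succ n ih => rw [sum_range_succ, mul_add, ih]; ring

theorem boxRev_involutive (r : ℕ) : Function.Involutive (boxRev r) := fun p => by
  simp [boxRev]

def boxFilter (r : ℕ) (P : ℕ → ℕ → ℕ → Prop) [∀ a b c, Decidable (P a b c)] :
    Finset (Box r) :=
  {p | P p.1 p.2.1 p.2.2}

section boxFilter

variable {r : ℕ} {P Q : ℕ → ℕ → ℕ → Prop} [∀ a b c, Decidable (P a b c)]
  [∀ a b c, Decidable (Q a b c)]

@[simp] theorem mem_boxFilter {p : Box r} : p ∈ boxFilter r P ↔ P p.1 p.2.1 p.2.2 := by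
  simp [boxFilter]

theorem isTSSC_boxFilter
    (mono : ∀ a b c a' b' c', a' ≤ a → b' ≤ b → c' ≤ c → P a b c → P a' b' c')
    (compl : ∀ a b c a' b' c', a + a' + 1 = 2 * r → b + b' + 1 = 2 * r → c + c' + 1 = 2 * r →
      (P a b c ↔ ¬ P a' b' c'))
    (swap₁₂ : ∀ a b c, P a b c → P b a c) (swap₂₃ : ∀ a b c, P a b c → P a c b) :
    IsTSSC r (boxFilter r P) := by
  refine ⟨⟨fun p hp q hqp => ?_, fun ⟨a, b, c⟩ => ?_⟩, fun a b c h => ?_⟩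
  · exact mem_boxFilter.2 (mono _ _ _ _ _ _ hqp.1 hqp.2.1 hqp.2.2 (mem_boxFilter.1 hp))
  · simpa [boxRev] using compl _ _ _ _ _ _ (by grind) (by grind) (by grind)
  · simp only [mem_boxFilter] at h ⊢
    exact ⟨swap₂₃ _ _ _ h, swap₁₂ _ _ _ h, swap₂₃ _ _ _ (swap₁₂ _ _ _ h),
      swap₁₂ _ _ _ (swap₂₃ _ _ _ h), swap₂₃ _ _ _ (swap₁₂ _ _ _ (swap₂₃ _ _ _ h))⟩

theorem card_boxFilter :
    #(boxFilter r P) = ∑ a ∈ range (2 * r), ∑ b ∈ range (2 * r), ∑ c ∈ range (2 * r),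
      if P a b c then 1 else 0 := by
  simp only [boxFilter, card_filter, Fintype.sum_prod_type, Finset.sum_range]

theorem card_boxFilter_or (h : ∀ a b c, P a b c → ¬ Q a b c) :
    #(boxFilter r fun a b c => P a b c ∨ Q a b c) = #(boxFilter r P) + #(boxFilter r Q) := by
  rw [← card_union_of_disjoint (disjoint_left.2 fun p hP hQ => h _ _ _ (mem_boxFilter.1 hP)
    (mem_boxFilter.1 hQ))]
  congr 1; ext; simp

theorem card_boxFilter_swap : #(boxFilter r fun a b c => P b a c) = #(boxFilter r P) := by
  rw [card_boxFilter, card_boxFilter, sum_comm]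

theorem card_boxFilter_rotate : #(boxFilter r fun a b c => P c a b) = #(boxFilter r P) := by
  rw [card_boxFilter, card_boxFilter, sum_congr rfl fun _ _ => sum_comm, sum_comm]

theorem card_boxFilter_rev :
    #(boxFilter r fun a b c => P (2 * r - (a + 1)) (2 * r - (b + 1)) (2 * r - (c + 1))) =
      #(boxFilter r P) := by
  refine card_nbij' (boxRev r) (boxRev r) (fun p hp => ?_) (fun p hp => ?_)
    (fun p _ => boxRev_involutive r p) (fun p _ => boxRev_involutive r p)
  · simpa [boxRev] using hp
  · simpa [boxRev, ← Fin.val_rev] using hp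

end boxFilter

abbrev Forced (r a b c : ℕ) : Prop :=
  a < r ∧ b + c < 2 * r ∨ b < r ∧ a + c < 2 * r ∨ c < r ∧ a + b < 2 * r

theorem IsTSSC.boxFilter_forced_subset {r : ℕ} {I : Finset (Box r)} (hI : IsTSSC r I) :
    boxFilter r (Forced r) ⊆ I := by
  rintro ⟨a, b, c⟩ hp
  have := a.isLt; have := b.isLt; have := c.isLt
  simp only [mem_boxFilter] at hp
  rcases hp with h | h | h
  · refine hI.1.mem_of_le (ψ := fun q => (q.1, q.2.2, q.2.1)) (fun q hq => ?_) ?_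
    · exact (hI.2 _ _ _ hq).1
    · simp [boxRev, Prod.mk_le_mk, Fin.le_def]; omega
  · refine hI.1.mem_of_le (ψ := fun q => (q.2.2, q.2.1, q.1)) (fun q hq => ?_) ?_
    · exact (hI.2 _ _ _ hq).2.2.2.2
    · simp [boxRev, Prod.mk_le_mk, Fin.le_def]; omega
  · refine hI.1.mem_of_le (ψ := fun q => (q.2.1, q.1, q.2.2)) (fun q hq => ?_) ?_
    · exact (hI.2 _ _ _ hq).2.1
    · simp [boxRev, Prod.mk_le_mk, Fin.le_def]; omega

abbrev LowHigh (r u v : ℕ) : Prop := r ≤ v ∧ u + v + 2 ≤ 2 * r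

abbrev LowHighHigh (r u v w : ℕ) : Prop := LowHigh r u v ∧ LowHigh r u w

abbrev FreeHigh (r a b c : ℕ) : Prop :=
  LowHighHigh r a b c ∨ LowHighHigh r b a c ∨ LowHighHigh r c a b

abbrev Free (r a b c : ℕ) : Prop :=
  FreeHigh r a b c ∨ FreeHigh r (2 * r - (a + 1)) (2 * r - (b + 1)) (2 * r - (c + 1))

theorem freeHigh_or_freeHigh_of_not_forced {r a b c a' b' c' : ℕ} (ha : a + a' + 1 = 2 * r)
    (hb : b + b' + 1 = 2 * r) (hc : c + c' + 1 = 2 * r) (h : ¬ Forced r a b c)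
    (h' : ¬ Forced r a' b' c') : FreeHigh r a b c ∨ FreeHigh r a' b' c' := by
  rcases lt_or_ge a r with ha' | ha' <;> rcases lt_or_ge b r with hb' | hb' <;>
    rcases lt_or_ge c r with hc' | hc'
  · exact (h (by omega)).elim
  · exact .inr (.inr (.inr (by omega)))
  · exact .inr (.inr (.inl (by omega)))
  · exact .inl (.inl (by omega))
  · exact .inr (.inl (by omega))
  · exact .inl (.inr (.inl (by omega)))
  · exact .inl (.inr (.inr (by omega)))
  · exact (h' (by omega)).elim

theorem IsTSSC.sdiff_subset_boxFilter_free {r : ℕ} {I J : Finset (Box r)} (hI : IsTSSC r I)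
    (hJ : IsTSSC r J) : I \ J ⊆ boxFilter r (Free r) := by
  intro p hp
  rw [mem_sdiff] at hp
  have hrevI : boxRev r p ∉ I := (hI.1.2 p).1 hp.1
  have hp' : p ∉ boxFilter r (Forced r) := fun h => hp.2 (hJ.boxFilter_forced_subset h)
  have hrev' : boxRev r p ∉ boxFilter r (Forced r) := fun h => hrevI (hI.boxFilter_forced_subset h)
  simp only [mem_boxFilter, boxRev, Fin.val_rev] at hp' hrev' ⊢
  exact freeHigh_or_freeHigh_of_not_forced (by omega) (by omega) (by omega) hp' hrev'

theorem card_boxFilter_free (r : ℕ) :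
    #(boxFilter r (Free r)) = 2 * #(boxFilter r (FreeHigh r)) := by
  rw [card_boxFilter_or (by omega), card_boxFilter_rev (P := FreeHigh r)]
  ring

theorem card_range_filter_lowHigh (r u : ℕ) :
    #{v ∈ range (2 * r) | LowHigh r u v} = r - 1 - u := by
  rw [show {v ∈ range (2 * r) | LowHigh r u v} = Ico r (2 * r - 1 - u) by
    ext v; simp only [mem_filter, mem_range, mem_Ico]; omega, Nat.card_Ico]
  omega

theorem card_boxFilter_lowHighHigh (r : ℕ) :
    #(boxFilter r (LowHighHigh r)) = ∑ k ∈ range r, k ^ 2 := by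
  have hprod (u v w : ℕ) : (if LowHighHigh r u v w then 1 else 0) =
      (if LowHigh r u v then 1 else 0) * (if LowHigh r u w then 1 else 0) := by
    rw [ite_zero_mul_ite_zero, mul_one]
  simp only [card_boxFilter, hprod, ← mul_sum, ← sum_mul, sum_boole, Nat.cast_id,
    card_range_filter_lowHigh, ← sq]
  rw [two_mul, sum_range_add, sum_range_reflect (· ^ 2), add_eq_left]
  exact sum_eq_zero fun k _ => by simp; omega

theorem card_boxFilter_freeHigh (r : ℕ) :
    #(boxFilter r (FreeHigh r)) = 3 * ∑ k ∈ range r, k ^ 2 := by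
  rw [card_boxFilter_or (by omega), card_boxFilter_or (by omega),
    card_boxFilter_swap (P := LowHighHigh r), card_boxFilter_rotate (P := LowHighHigh r),
    card_boxFilter_lowHighHigh]
  ring

theorem two_mul_card_boxFilter_freeHigh (r : ℕ) :
    2 * #(boxFilter r (FreeHigh r)) = (r - 1) * r * (2 * r - 1) := by
  rw [card_boxFilter_freeHigh, ← mul_assoc, show 2 * 3 = 6 from rfl]
  rcases r with _ | r
  · simp
  · rw [six_mul_sum_range_sq, Nat.add_sub_cancel, show 2 * (r + 1) - 1 = 2 * r + 1 by omega]

abbrev LowMajority (r a b c : ℕ) : Prop := a < r ∧ b < r ∨ a < r ∧ c < r ∨ b < r ∧ c < r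

abbrev ForcedOrFreeHigh (r a b c : ℕ) : Prop := Forced r a b c ∨ FreeHigh r a b c

theorem isTSSC_boxFilter_lowMajority (r : ℕ) : IsTSSC r (boxFilter r (LowMajority r)) :=
  isTSSC_boxFilter (by omega) (by omega) (by omega) (by omega)

theorem isTSSC_boxFilter_forcedOrFreeHigh (r : ℕ) :
    IsTSSC r (boxFilter r (ForcedOrFreeHigh r)) := by
  refine isTSSC_boxFilter (by omega) (fun a b c a' b' c' ha hb hc => ⟨?_, fun h => ?_⟩)
    (by omega) (by omega)
  · omega
  · refine or_iff_not_imp_left.2 fun hF => ?_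
    exact (freeHigh_or_freeHigh_of_not_forced ha hb hc hF (h ∘ .inl)).resolve_right (h ∘ .inr)

theorem boxFilter_forcedOrFreeHigh_sdiff_lowMajority (r : ℕ) :
    boxFilter r (ForcedOrFreeHigh r) \ boxFilter r (LowMajority r) =
      boxFilter r (FreeHigh r) := by
  ext p; simp only [mem_sdiff, mem_boxFilter]; omega

theorem tssc_diameter_general (r : ℕ) :
    (∀ I J : Finset (Box r), IsTSSC r I → IsTSSC r J →
      2 * (I \ J).card ≤ (r - 1) * r * (2 * r - 1)) ∧
    (∃ I J : Finset (Box r), IsTSSC r I ∧ IsTSSC r J ∧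
      2 * (I \ J).card = (r - 1) * r * (2 * r - 1)) := by
  refine ⟨fun I J hI hJ => ?_, ⟨_, _, isTSSC_boxFilter_forcedOrFreeHigh r,
    isTSSC_boxFilter_lowMajority r, ?_⟩⟩
  · calc 2 * #(I \ J) ≤ #(boxFilter r (Free r)) :=
          two_mul_card_sdiff_le (boxRev_involutive r).injective hI.1.2 hJ.1.2
            (hI.sdiff_subset_boxFilter_free hJ) (hJ.sdiff_subset_boxFilter_free hI)
      _ = (r - 1) * r * (2 * r - 1) := by
          rw [card_boxFilter_free, two_mul_card_boxFilter_freeHigh]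
  · rw [boxFilter_forcedOrFreeHigh_sdiff_lowMajority, two_mul_card_boxFilter_freeHigh]

/-- Any two totally symmetric self-complementary ideals `I`, `J` of `[2r]³` satisfy
`|I \ J| ≤ (r-1)r(2r-1)/2`, and some pair of TSSC ideals attains equality.
(Since the distance between TSSC ideals in the flip graph is `|I \ J|/3`, this says
the diameter of the flip graph on TSSC ideals equals `(r-1)r(2r-1)/6`.) -/
theorem tssc_diameter (r : ℕ) (hr : 0 < r) :
    (∀ I J : Finset (Box r), IsTSSC r I → IsTSSC r J →
      2 * (I \ J).card ≤ (r - 1) * r * (2 * r - 1)) ∧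
    (∃ I J : Finset (Box r), IsTSSC r I ∧ IsTSSC r J ∧
      2 * (I \ J).card = (r - 1) * r * (2 * r - 1)) :=
  tssc_diameter_general r
end
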